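/- arXiv:math/0510273 — 4 statements merged into one kernel-verified Lean document; each statement's English description precedes it below -/
import Mathlib

section
/- Let F be a heavy-tailed distribution on [0,∞). If for some c ∈ (0,∞), (F*F)‾(x) ~ c F̄(x) as x → ∞, then c = 2 and F is subexponential, i.e., (F*F)‾(x) ~ 2F̄(x). -/
open MeasureTheory Filter Real Set
open scoped ENNReal Topology
open scoped NNReal

noncomputable section

/-- Convolution of two measures on ℝ: distribution of the sum of independent r.v.'s. -/
def mconv (μ ν : MeasureTheory.Measure ℝ) : MeasureTheory.Measure ℝ :=
  MeasureTheory.Measure.map (fun p : ℝ × ℝ => p.1 + p.2) (μ.prod ν)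

/-- The tail F̄(x) = F(x,∞). -/
def tail (F : MeasureTheory.Measure ℝ) (x : ℝ) : ℝ≥0∞ := F (Set.Ioi x)

/-- Laplace transform φ(γ) = ∫ e^{γx} F(dx), with value in [0,∞]. -/
def phi (F : MeasureTheory.Measure ℝ) (γ : ℝ) : ℝ≥0∞ :=
  ∫⁻ x, ENNReal.ofReal (Real.exp (γ * x)) ∂F

/-- F is heavy-tailed: φ(γ) = ∞ for every γ > 0. -/
def IsHeavyTailed (F : MeasureTheory.Measure ℝ) : Prop :=
  ∀ γ : ℝ, 0 < γ → phi F γ = ⊤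

/-- γ̂ = sup{γ : φ(γ) < ∞} ∈ [0,∞] (for distributions on [0,∞)). -/
def gammaHat (F : MeasureTheory.Measure ℝ) : ℝ≥0∞ :=
  sSup {p : ℝ≥0∞ | ∃ γ : ℝ, p = ENNReal.ofReal γ ∧ phi F γ < ⊤}

/-- φ(γ̂) = lim_{γ↑γ̂} φ(γ), realized (by monotonicity of φ) as sup over γ < γ̂. -/
def phiHat (F : MeasureTheory.Measure ℝ) : ℝ≥0∞ :=
  ⨆ (γ : ℝ) (_ : ENNReal.ofReal γ < gammaHat F ∨ γ < 0), phi F γ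

theorem aux_int (γ b : ℝ) :
    ∫ x in (0:ℝ)..b, γ * Real.exp (γ * x) = Real.exp (γ * b) - 1 := by
  have h := intervalIntegral.mul_integral_comp_mul_left (f := fun x => Real.exp x)
    (a := 0) (b := b) (c := γ)
  rw [intervalIntegral.integral_const_mul, h, integral_exp]
  simp

theorem aux_lint (γ b : ℝ) (hγ : 0 < γ) :
    ∫⁻ x in Set.Ioo (0:ℝ) b, ENNReal.ofReal (γ * Real.exp (γ * x))
      = ENNReal.ofReal (Real.exp (γ * max b 0) - 1) := by
  rcases le_or_gt b 0 with hb | hb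
  · rw [Set.Ioo_eq_empty (by linarith)]
    simp [max_eq_right hb]
  · have hcont : Continuous (fun x : ℝ => γ * Real.exp (γ * x)) := by continuity
    have hint : IntegrableOn (fun x => γ * Real.exp (γ * x)) (Set.Ioo 0 b) :=
      (hcont.integrableOn_Icc (a := 0) (b := b)).mono_set Set.Ioo_subset_Icc_self
    rw [← ofReal_integral_eq_lintegral_ofReal hint]
    · rw [max_eq_left hb.le]
      congr 1
      rw [← MeasureTheory.integral_Ioc_eq_integral_Ioo,
        ← intervalIntegral.integral_of_le hb.le, aux_int]
    · filter_upwards with x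
      positivity

/-- L1: master Fubini identity. -/
theorem aux_fub (μ : Measure ℝ) [SFinite μ] (γ T : ℝ) (hγ : 0 < γ) (hT : 0 ≤ T) :
    ∫⁻ x in Set.Ioo (0:ℝ) T, ENNReal.ofReal (γ * Real.exp (γ * x)) * μ (Set.Ioi x)
      = ∫⁻ y, ENNReal.ofReal (Real.exp (γ * min y T) - 1) ∂μ := by
  have hmeasind : MeasurableSet {q : ℝ × ℝ | q.1 < q.2} :=
    measurableSet_lt measurable_fst measurable_snd
  have hgm : Measurable (fun x : ℝ => γ * Real.exp (γ * x)) := by fun_prop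
  have hg : Measurable (fun x : ℝ => ENNReal.ofReal (γ * Real.exp (γ * x))) :=
    hgm.ennreal_ofReal
  have step1 : ∀ x : ℝ, ENNReal.ofReal (γ * Real.exp (γ * x)) * μ (Set.Ioi x)
      = ∫⁻ y, ENNReal.ofReal (γ * Real.exp (γ * x))
          * Set.indicator (Set.Ioi x) (fun _ => (1:ℝ≥0∞)) y ∂μ := by
    intro x
    rw [lintegral_const_mul _ ((measurable_const.indicator measurableSet_Ioi))]
    congr 1
    rw [← lintegral_indicator_one measurableSet_Ioi]
    rfl
  simp_rw [step1]
  rw [lintegral_lintegral_swap]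
  · congr 1
    ext y
    have hind : ∀ x : ℝ, ENNReal.ofReal (γ * Real.exp (γ * x))
        * Set.indicator (Set.Ioi x) (fun _ => (1:ℝ≥0∞)) y
        = Set.indicator (Set.Iio y) (fun x => ENNReal.ofReal (γ * Real.exp (γ * x))) x := by
      intro x
      by_cases hxy : x < y
      · have h1 : y ∈ Set.Ioi x := hxy
        have h2 : x ∈ Set.Iio y := hxy
        simp [Set.indicator_of_mem h1, Set.indicator_of_mem h2]
      · have h1 : y ∉ Set.Ioi x := hxy
        have h2 : x ∉ Set.Iio y := hxy
        simp [Set.indicator_of_notMem h1, Set.indicator_of_notMem h2]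
    simp_rw [hind]
    rw [lintegral_indicator measurableSet_Iio, Measure.restrict_restrict measurableSet_Iio]
    have hset : Set.Iio y ∩ Set.Ioo (0:ℝ) T = Set.Ioo (0:ℝ) (min T y) := by
      ext x; simp only [Set.mem_inter_iff, Set.mem_Ioo, Set.mem_Iio, lt_min_iff]; tauto
    rw [hset, aux_lint γ _ hγ]
    rcases le_or_gt 0 y with hy | hy
    · rw [max_eq_left (le_min hT hy), min_comm]
    · rw [max_eq_right (by simp only [min_le_iff]; right; linarith)]
      rw [min_eq_left (by linarith)]
      rw [ENNReal.ofReal_eq_zero.2 (by simp), ENNReal.ofReal_eq_zero.2 ?_]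
      nlinarith [Real.exp_lt_one_iff.2 (show γ * y < 0 by nlinarith), Real.exp_pos (γ*y)]
  · apply Measurable.aemeasurable
    have : (Function.uncurry fun x y => ENNReal.ofReal (γ * Real.exp (γ * x))
        * Set.indicator (Set.Ioi x) (fun _ => (1:ℝ≥0∞)) y)
        = fun p : ℝ × ℝ => ENNReal.ofReal (γ * Real.exp (γ * p.1))
          * Set.indicator {q : ℝ × ℝ | q.1 < q.2} (fun _ => (1:ℝ≥0∞)) p := by
      ext p
      simp only [Function.uncurry, Set.indicator_apply, Set.mem_Ioi, Set.mem_setOf_eq]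
    rw [this]
    exact (hg.comp measurable_fst).mul (measurable_const.indicator hmeasind)

/-- L4: the supremum of truncated transforms is infinite for a heavy-tailed F. -/
theorem aux_sup (F : Measure ℝ) [IsProbabilityMeasure F] (hheavy : IsHeavyTailed F)
    (γ : ℝ) (hγ : 0 < γ) :
    (⨆ n : ℕ, ∫⁻ y, ENNReal.ofReal (Real.exp (γ * min y n) - 1) ∂F) = ⊤ := by
  have hmeas : ∀ n : ℕ, Measurable (fun y : ℝ => ENNReal.ofReal (Real.exp (γ * min y n) - 1)) := by
    intro n
    apply Measurable.ennreal_ofReal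
    fun_prop
  rw [← lintegral_iSup hmeas]
  · have hsup : ∀ y : ℝ, (⨆ n : ℕ, ENNReal.ofReal (Real.exp (γ * min y n) - 1))
        = ENNReal.ofReal (Real.exp (γ * y) - 1) := by
      intro y
      apply le_antisymm
      · apply iSup_le
        intro n
        apply ENNReal.ofReal_le_ofReal
        have : min y n ≤ y := min_le_left _ _
        gcongr
      · apply le_iSup_of_le ⌈y⌉₊
        rw [min_eq_left (Nat.le_ceil y)]
    simp_rw [hsup]
    by_contra hfin
    have hle : phi F γ ≤ ∫⁻ y, (ENNReal.ofReal (Real.exp (γ * y) - 1) + 1) ∂F := by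
      apply lintegral_mono
      intro y
      rcases le_or_gt (Real.exp (γ * y)) 1 with hr | hr
      · calc ENNReal.ofReal (Real.exp (γ * y)) ≤ 1 := ENNReal.ofReal_le_one.2 hr
          _ ≤ _ := le_add_self
      · show ENNReal.ofReal (Real.exp (γ * y)) ≤ ENNReal.ofReal (Real.exp (γ * y) - 1) + 1
        rw [show Real.exp (γ * y) = (Real.exp (γ * y) - 1) + 1 by ring,
          ENNReal.ofReal_add (by linarith) (by norm_num)]
        simp
    rw [lintegral_add_right _ measurable_const, lintegral_const, one_mul, measure_univ] at hle
    rw [hheavy γ hγ] at hle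
    have h1 : (∫⁻ y, ENNReal.ofReal (Real.exp (γ * y) - 1) ∂F) + 1 < ⊤ := by
      rw [ENNReal.add_lt_top]
      exact ⟨lt_top_iff_ne_top.2 hfin, ENNReal.one_lt_top⟩
    exact absurd (top_le_iff.1 hle) (by exact fun hh => by simp [hh] at h1)
  · intro i j hij y
    apply ENNReal.ofReal_le_ofReal
    have : min y (i:ℝ) ≤ min y (j:ℝ) := by
      apply min_le_min le_rfl
      exact_mod_cast hij
    gcongr

/-- L6: the subadditivity bound for the convolution. -/
theorem aux_prod (F : Measure ℝ) [IsProbabilityMeasure F] (hsupp : F (Set.Iio 0) = 0)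
    (γ T : ℝ) (hγ : 0 < γ) (hT : 0 ≤ T) :
    (∫⁻ y, ENNReal.ofReal (Real.exp (γ * min y T) - 1) ∂(mconv F F))
      ≤ 2 * (∫⁻ y, ENNReal.ofReal (Real.exp (γ * min y T) - 1) ∂F)
        + (∫⁻ y, ENNReal.ofReal (Real.exp (γ * min y T) - 1) ∂F)
          * (∫⁻ y, ENNReal.ofReal (Real.exp (γ * min y T) - 1) ∂F) := by
  set A : ℝ → ℝ≥0∞ := fun y => ENNReal.ofReal (Real.exp (γ * min y T) - 1) with hA
  have hAm : Measurable A := by apply Measurable.ennreal_ofReal; fun_prop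
  have hadd : Measurable (fun p : ℝ × ℝ => p.1 + p.2) := measurable_fst.add measurable_snd
  rw [mconv, lintegral_map hAm hadd]
  have hae : ∀ᵐ p ∂(F.prod F), 0 ≤ p.1 ∧ 0 ≤ p.2 := by
    have hnull : (F.prod F) ((Set.Iio 0 ×ˢ Set.univ) ∪ (Set.univ ×ˢ Set.Iio 0)) = 0 := by
      apply le_antisymm _ (zero_le)
      apply le_trans (measure_union_le _ _)
      rw [Measure.prod_prod, Measure.prod_prod, hsupp]
      simp
    apply (measure_mono_null ?_ hnull)
    intro p hp
    simp only [Set.mem_compl_iff, Set.mem_setOf_eq] at hp ⊢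
    by_cases h1 : 0 ≤ p.1
    · right; constructor
      · trivial
      · simp only [Set.mem_Iio]; by_contra h2; exact hp ⟨h1, le_of_not_gt (by simpa using h2)⟩
    · left; exact ⟨lt_of_not_ge h1, trivial⟩
  have hptwise : ∀ᵐ p ∂(F.prod F), A (p.1 + p.2) ≤ A p.1 + A p.2 + A p.1 * A p.2 := by
    filter_upwards [hae] with p hp
    obtain ⟨hy, hz⟩ := hp
    set y := p.1; set z := p.2
    have h1 : 0 ≤ min y T := le_min hy hT
    have h2 : 0 ≤ min z T := le_min hz hT
    have ha : (0:ℝ) ≤ Real.exp (γ * min y T) - 1 := by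
      have := Real.one_le_exp (by positivity : 0 ≤ γ * min y T); linarith
    have hb : (0:ℝ) ≤ Real.exp (γ * min z T) - 1 := by
      have := Real.one_le_exp (by positivity : 0 ≤ γ * min z T); linarith
    have key : Real.exp (γ * min (y + z) T) - 1
        ≤ (Real.exp (γ * min y T) - 1) + (Real.exp (γ * min z T) - 1)
          + (Real.exp (γ * min y T) - 1) * (Real.exp (γ * min z T) - 1) := by
      have hmin : min (y + z) T ≤ min y T + min z T := by
        rcases le_total (y + z) T with hyz | hyz
        · rw [min_eq_left hyz, min_eq_left (by linarith : y ≤ T), min_eq_left (by linarith : z ≤ T)]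
        · rw [min_eq_right hyz]
          rcases le_total y T with hcy | hcy
          · rcases le_total z T with hcz | hcz
            · rw [min_eq_left hcy, min_eq_left hcz]; linarith
            · rw [min_eq_left hcy, min_eq_right hcz]; linarith
          · rw [min_eq_right hcy]; linarith
      have := Real.exp_le_exp.2 (mul_le_mul_of_nonneg_left hmin hγ.le)
      rw [mul_add, Real.exp_add] at this
      nlinarith [Real.exp_pos (γ * min y T), Real.exp_pos (γ * min z T)]
    calc A (y + z) ≤ ENNReal.ofReal ((Real.exp (γ * min y T) - 1) + (Real.exp (γ * min z T) - 1)
          + (Real.exp (γ * min y T) - 1) * (Real.exp (γ * min z T) - 1)) :=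
        ENNReal.ofReal_le_ofReal key
      _ = A y + A z + A y * A z := by
        rw [ENNReal.ofReal_add (by positivity) (by positivity), ENNReal.ofReal_add ha hb,
          ENNReal.ofReal_mul ha]
  calc (∫⁻ p, A (p.1 + p.2) ∂(F.prod F))
      ≤ ∫⁻ p, (A p.1 + A p.2 + A p.1 * A p.2) ∂(F.prod F) := lintegral_mono_ae hptwise
    _ = (∫⁻ p, A p.1 ∂(F.prod F)) + (∫⁻ p, A p.2 ∂(F.prod F))
        + ∫⁻ p, A p.1 * A p.2 ∂(F.prod F) := by
        rw [lintegral_add_left (show Measurable fun p : ℝ × ℝ => A p.1 + A p.2 from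
            (hAm.comp measurable_fst).add (hAm.comp measurable_snd)),
          lintegral_add_left (show Measurable fun p : ℝ × ℝ => A p.1 from
            hAm.comp measurable_fst)]
    _ = (∫⁻ y, A y ∂F) + (∫⁻ y, A y ∂F) + (∫⁻ y, A y ∂F) * (∫⁻ y, A y ∂F) := by
        congr 1
        · congr 1
          · rw [MeasureTheory.lintegral_prod _
              (show AEMeasurable (fun p : ℝ × ℝ => A p.1) (F.prod F) from
                (hAm.comp measurable_fst).aemeasurable)]
            simp [lintegral_const]
          · rw [MeasureTheory.lintegral_prod _
              (show AEMeasurable (fun p : ℝ × ℝ => A p.2) (F.prod F) from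
                (hAm.comp measurable_snd).aemeasurable)]
            simp [lintegral_const]
        · exact MeasureTheory.lintegral_prod_mul hAm.aemeasurable hAm.aemeasurable
    _ = 2 * (∫⁻ y, A y ∂F) + (∫⁻ y, A y ∂F) * (∫⁻ y, A y ∂F) := by ring

/-- tail tends to 0. -/
theorem aux_tail0 (F : Measure ℝ) [IsProbabilityMeasure F] :
    Tendsto (fun x : ℝ => tail F x) atTop (𝓝 0) := by
  have h := tendsto_measure_iInter_atTop (μ := F) (s := fun x : ℝ => Set.Ioi x)
    (fun x => measurableSet_Ioi.nullMeasurableSet)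
    (fun x y hxy => Set.Ioi_subset_Ioi hxy) ⟨0, measure_ne_top F _⟩
  have hempty : (⋂ x : ℝ, Set.Ioi x) = ∅ := by
    ext z
    simp only [Set.mem_iInter, Set.mem_Ioi, Set.mem_empty_iff_false, iff_false, not_forall]
    exact ⟨z + 1, by simp [not_lt]⟩
  rw [hempty] at h
  simpa [tail, Function.comp_def] using h

/-- Inclusion-exclusion lower bound. -/
theorem aux_lower (F : Measure ℝ) [IsProbabilityMeasure F] (hsupp : F (Set.Iio 0) = 0)
    (x : ℝ) (hx : 0 ≤ x) :
    2 * tail F x ≤ tail (mconv F F) x + tail F x * tail F x := by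
  have hadd : Measurable (fun p : ℝ × ℝ => p.1 + p.2) := measurable_fst.add measurable_snd
  have hIci : F (Set.Ici 0) = 1 := by
    rw [← Set.compl_Iio, measure_compl measurableSet_Iio (measure_ne_top F _), hsupp,
      measure_univ, tsub_zero]
  have htail2 : tail (mconv F F) x = (F.prod F) {p : ℝ × ℝ | x < p.1 + p.2} := by
    rw [tail, mconv, Measure.map_apply hadd measurableSet_Ioi]
    rfl
  set A : Set (ℝ × ℝ) := Set.Ioi x ×ˢ Set.Ici 0
  set B : Set (ℝ × ℝ) := Set.Ici 0 ×ˢ Set.Ioi x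
  have hsub : A ∪ B ⊆ {p : ℝ × ℝ | x < p.1 + p.2} := by
    rintro p (hp | hp)
    · obtain ⟨h1, h2⟩ := hp
      simp only [Set.mem_Ioi] at h1
      simp only [Set.mem_Ici] at h2
      simp only [Set.mem_setOf_eq]; linarith
    · obtain ⟨h1, h2⟩ := hp
      simp only [Set.mem_Ici] at h1
      simp only [Set.mem_Ioi] at h2
      simp only [Set.mem_setOf_eq]; linarith
  have hAB : A ∩ B = Set.Ioi x ×ˢ Set.Ioi x := by
    rw [Set.prod_inter_prod]
    congr 1
    · exact Set.inter_eq_left.2 (fun y hy => le_trans hx (le_of_lt hy))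
    · exact Set.inter_eq_right.2 (fun y hy => le_trans hx (le_of_lt hy))
  have hkey := measure_union_add_inter (μ := F.prod F) A
    ((measurableSet_Ici.prod measurableSet_Ioi) : MeasurableSet B)
  rw [hAB] at hkey
  have hAval : (F.prod F) A = tail F x := by
    rw [Measure.prod_prod, hIci, mul_one]; rfl
  have hBval : (F.prod F) B = tail F x := by
    rw [Measure.prod_prod, hIci, one_mul]; rfl
  have hIval : (F.prod F) (Set.Ioi x ×ˢ Set.Ioi x) = tail F x * tail F x := by
    rw [Measure.prod_prod]; rfl
  rw [hAval, hBval, hIval] at hkey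
  calc 2 * tail F x = tail F x + tail F x := by ring
    _ = (F.prod F) (A ∪ B) + tail F x * tail F x := hkey.symm
    _ ≤ tail (mconv F F) x + tail F x * tail F x := by
        rw [htail2]; exact add_le_add_left (measure_mono hsub) _

set_option maxHeartbeats 1000000 in
/-- Theorem 4: if F is heavy-tailed and (F*F)‾(x) ~ cF̄(x) for some
c ∈ (0,∞), then c = 2 and F is subexponential. -/
theorem stmt11 (F : MeasureTheory.Measure ℝ) [MeasureTheory.IsProbabilityMeasure F]
    (hsupp : F (Set.Iio 0) = 0) (hub : ∀ x : ℝ, tail F x ≠ 0)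
    (hheavy : IsHeavyTailed F)
    (c : ℝ) (hc : 0 < c)
    (h : Tendsto (fun x : ℝ => tail (mconv F F) x / tail F x) atTop
      (𝓝 (ENNReal.ofReal c))) :
    c = 2 ∧
      Tendsto (fun x : ℝ => tail (mconv F F) x / tail F x) atTop (𝓝 2) := by
  have hadd : Measurable (fun p : ℝ × ℝ => p.1 + p.2) := measurable_fst.add measurable_snd
  haveI hconv_prob : IsProbabilityMeasure (mconv F F) := by
    rw [mconv]; exact Measure.isProbabilityMeasure_map hadd.aemeasurable
  have htailm : Measurable (tail F) :=
    Antitone.measurable (fun a b hab => measure_mono (Set.Ioi_subset_Ioi hab))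
  -- Part A : 2 ≤ c
  have hge : 2 ≤ c := by
    by_contra hlt
    push_neg at hlt
    set δ : ℝ := (2 - c) / 2 with hδdef
    have hδpos : 0 < δ := by simp only [hδdef]; linarith
    have hev1 : ∀ᶠ x : ℝ in atTop, tail F x < ENNReal.ofReal δ :=
      (aux_tail0 F).eventually (eventually_lt_nhds (by simp [ENNReal.ofReal_pos, hδpos]))
    have hev2 : ∀ᶠ x : ℝ in atTop, (0:ℝ) ≤ x := eventually_ge_atTop 0
    have hev : ∀ᶠ x : ℝ in atTop,
        ENNReal.ofReal (2 - δ) ≤ tail (mconv F F) x / tail F x := by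
      filter_upwards [hev1, hev2] with x hx1 hx2
      rw [ENNReal.le_div_iff_mul_le (Or.inl (hub x)) (Or.inl (measure_ne_top F _))]
      have hkey := aux_lower F hsupp x hx2
      have h1 : ENNReal.ofReal (2 - δ) * tail F x + tail F x * tail F x ≤ 2 * tail F x := by
        calc ENNReal.ofReal (2 - δ) * tail F x + tail F x * tail F x
            = (ENNReal.ofReal (2 - δ) + tail F x) * tail F x := by ring
          _ ≤ (ENNReal.ofReal (2 - δ) + ENNReal.ofReal δ) * tail F x :=
              mul_le_mul_left (add_le_add_right hx1.le _) _
          _ = 2 * tail F x := by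
              rw [← ENNReal.ofReal_add (by linarith) hδpos.le]
              norm_num
      have h2 : ENNReal.ofReal (2 - δ) * tail F x + tail F x * tail F x
          ≤ tail (mconv F F) x + tail F x * tail F x := le_trans h1 hkey
      exact (ENNReal.add_le_add_iff_right
        (ENNReal.mul_ne_top (measure_ne_top F _) (measure_ne_top F _))).1 h2
    have hlim : ENNReal.ofReal (2 - δ) ≤ ENNReal.ofReal c := ge_of_tendsto h hev
    have : 2 - δ ≤ c := (ENNReal.ofReal_le_ofReal_iff hc.le).1 hlim
    simp only [hδdef] at this
    linarith
  -- Part B : c ≤ 2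
  have hle : c ≤ 2 := by
    by_contra hgt
    push_neg at hgt
    set ε : ℝ := (c - 2) / 8 with hεdef
    set s₀ : ℝ := (c - 2) / 8 with hs₀def
    have hεpos : 0 < ε := by simp only [hεdef]; linarith
    have hcε : (0:ℝ) < c - ε := by simp only [hεdef]; linarith
    have hs₀pos : 0 < s₀ := by simp only [hs₀def]; linarith
    -- lower tail equivalence
    obtain ⟨x₀', hx₀'⟩ := (eventually_atTop.1 (h.eventually (eventually_gt_nhds
      (show ENNReal.ofReal (c - ε) < ENNReal.ofReal c by
        rw [ENNReal.ofReal_lt_ofReal_iff hc]; linarith))))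
    set x₀ : ℝ := max x₀' 1 with hx₀def
    have hx₀1 : 1 ≤ x₀ := le_max_right _ _
    have hx₀pos : 0 < x₀ := by linarith
    have hlow : ∀ x : ℝ, x₀ ≤ x →
        ENNReal.ofReal (c - ε) * tail F x ≤ tail (mconv F F) x := by
      intro x hx
      have := hx₀' x (le_trans (le_max_left _ _) hx)
      exact (ENNReal.le_div_iff_mul_le (Or.inl (hub x))
        (Or.inl (measure_ne_top F _))).1 (le_of_lt this)
    -- choice of γ
    set η : ℝ := (c - 2) * s₀ / (8 * c) with hηdef
    have hηpos : 0 < η := by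
      simp only [hηdef]
      apply div_pos (mul_pos (by linarith) hs₀pos) (by linarith)
    have hEpos : 0 < Real.exp x₀ * x₀ := by positivity
    set γ : ℝ := min 1 (η / (Real.exp x₀ * x₀)) with hγdef
    have hγpos : 0 < γ := lt_min one_pos (by positivity)
    have hγ1 : γ ≤ 1 := min_le_left _ _
    set C₀ : ℝ := γ * (Real.exp x₀ * x₀) with hC₀def
    have hC₀pos : 0 < C₀ := by positivity
    have hC₀η : C₀ ≤ η := by
      have : γ ≤ η / (Real.exp x₀ * x₀) := min_le_right _ _
      calc C₀ ≤ (η / (Real.exp x₀ * x₀)) * (Real.exp x₀ * x₀) := by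
            simp only [hC₀def]; gcongr
        _ = η := div_mul_cancel₀ _ (ne_of_gt hEpos)
    have hC₀s₀ : C₀ < s₀ := by
      apply lt_of_le_of_lt hC₀η
      simp only [hηdef]
      rw [div_lt_iff₀ (by linarith : (0:ℝ) < 8 * c)]
      nlinarith
    -- the functions
    set g : ℝ → ℝ≥0∞ := fun x => ENNReal.ofReal (γ * Real.exp (γ * x)) with hgdef
    have hgm : Measurable g := by apply Measurable.ennreal_ofReal; fun_prop
    set ψ : ℝ → ℝ≥0∞ := fun t => ∫⁻ x in Set.Ioo (0:ℝ) t, g x * tail F x with hψdef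
    set ψ₂ : ℝ → ℝ≥0∞ := fun t => ∫⁻ x in Set.Ioo (0:ℝ) t, g x * tail (mconv F F) x with hψ₂def
    -- bound lemma
    have hbound : ∀ t b : ℝ, 0 ≤ t → t ≤ b →
        ψ t ≤ ENNReal.ofReal (γ * Real.exp (γ * b) * t) := by
      intro t b ht htb
      calc ψ t ≤ ∫⁻ _ in Set.Ioo (0:ℝ) t, ENNReal.ofReal (γ * Real.exp (γ * b)) := by
            apply lintegral_mono_ae
            filter_upwards [ae_restrict_mem measurableSet_Ioo] with x hx
            calc g x * tail F x ≤ ENNReal.ofReal (γ * Real.exp (γ * b)) * 1 := by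
                  apply mul_le_mul'
                  · apply ENNReal.ofReal_le_ofReal
                    have : x ≤ b := by linarith [hx.2]
                    have := Real.exp_le_exp.2 (mul_le_mul_of_nonneg_left this hγpos.le)
                    nlinarith
                  · exact prob_le_one
              _ = ENNReal.ofReal (γ * Real.exp (γ * b)) := mul_one _
        _ = ENNReal.ofReal (γ * Real.exp (γ * b)) * volume (Set.Ioo (0:ℝ) t) :=
            setLIntegral_const _ _
        _ = ENNReal.ofReal (γ * Real.exp (γ * b) * t) := by
            rw [Real.volume_Ioo, sub_zero, ← ENNReal.ofReal_mul (by positivity)]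
    have hψfin : ∀ t : ℝ, ψ t ≠ ⊤ := by
      intro t
      rcases le_total 0 t with ht | ht
      · exact ne_top_of_le_ne_top ENNReal.ofReal_ne_top (hbound t t ht le_rfl)
      · have : Set.Ioo (0:ℝ) t = ∅ := Set.Ioo_eq_empty (by intro hlt'; linarith [hlt'])
        simp [hψdef, this]
    -- splitting
    have hsplit : ∀ t t' : ℝ, 0 < t → t ≤ t' →
        ψ t' = ψ t + ∫⁻ x in Set.Ico t t', g x * tail F x := by
      intro t t' ht htt'
      have hU : Set.Ioo (0:ℝ) t' = Set.Ioo (0:ℝ) t ∪ Set.Ico t t' := by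
        ext x
        simp only [Set.mem_Ioo, Set.mem_union, Set.mem_Ico]
        constructor
        · rintro ⟨h1, h2⟩
          rcases lt_or_ge x t with h3 | h3
          · exact Or.inl ⟨h1, h3⟩
          · exact Or.inr ⟨h3, h2⟩
        · rintro (⟨h1, h2⟩ | ⟨h1, h2⟩)
          · exact ⟨h1, by linarith⟩
          · exact ⟨by linarith, h2⟩
      have hdisj : Disjoint (Set.Ioo (0:ℝ) t) (Set.Ico t t') := by
        rw [Set.disjoint_left]
        rintro x ⟨_, h2⟩ ⟨h3, _⟩
        linarith
      simp only [hψdef]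
      rw [hU, lintegral_union measurableSet_Ico hdisj]
    have hincbound : ∀ t t' b : ℝ, 0 ≤ t → t ≤ t' → t' ≤ b →
        ∫⁻ x in Set.Ico t t', g x * tail F x
          ≤ ENNReal.ofReal (γ * Real.exp (γ * b) * (t' - t)) := by
      intro t t' b ht htt' ht'b
      calc (∫⁻ x in Set.Ico t t', g x * tail F x)
          ≤ ∫⁻ _ in Set.Ico t t', ENNReal.ofReal (γ * Real.exp (γ * b)) := by
            apply lintegral_mono_ae
            filter_upwards [ae_restrict_mem measurableSet_Ico] with x hx
            calc g x * tail F x ≤ ENNReal.ofReal (γ * Real.exp (γ * b)) * 1 := by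
                  apply mul_le_mul'
                  · apply ENNReal.ofReal_le_ofReal
                    have : x ≤ b := by linarith [hx.2]
                    have := Real.exp_le_exp.2 (mul_le_mul_of_nonneg_left this hγpos.le)
                    nlinarith
                  · exact prob_le_one
              _ = ENNReal.ofReal (γ * Real.exp (γ * b)) := mul_one _
        _ = ENNReal.ofReal (γ * Real.exp (γ * b)) * volume (Set.Ico t t') :=
            setLIntegral_const _ _
        _ = ENNReal.ofReal (γ * Real.exp (γ * b) * (t' - t)) := by
            rw [Real.volume_Ico, ← ENNReal.ofReal_mul (by positivity)]
    -- the real function G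
    set G : ℝ → ℝ := fun t => (ψ t).toReal with hGdef
    have hGmono : ∀ t t' : ℝ, t ≤ t' → G t ≤ G t' := by
      intro t t' htt'
      apply ENNReal.toReal_mono (hψfin t')
      exact lintegral_mono_set (Set.Ioo_subset_Ioo le_rfl htt')
    -- find M
    obtain ⟨n, hn⟩ : ∃ n : ℕ, ENNReal.ofReal s₀
        < ∫⁻ y, ENNReal.ofReal (Real.exp (γ * min y n) - 1) ∂F := by
      have hsup := aux_sup F hheavy γ hγpos
      have : ENNReal.ofReal s₀
          < ⨆ n : ℕ, ∫⁻ y, ENNReal.ofReal (Real.exp (γ * min y n) - 1) ∂F := by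
        rw [hsup]; exact ENNReal.ofReal_lt_top
      exact lt_iSup_iff.1 this
    set M : ℝ := max (n:ℝ) x₀ with hMdef
    have hx₀M : x₀ ≤ M := le_max_right _ _
    have hM0 : 0 ≤ M := by linarith
    have hψeq : ∀ T : ℝ, 0 ≤ T → ψ T
        = ∫⁻ y, ENNReal.ofReal (Real.exp (γ * min y T) - 1) ∂F := by
      intro T hT
      exact aux_fub F γ T hγpos hT
    have hψ₂eq : ∀ T : ℝ, 0 ≤ T → ψ₂ T
        = ∫⁻ y, ENNReal.ofReal (Real.exp (γ * min y T) - 1) ∂(mconv F F) := by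
      intro T hT
      exact aux_fub (mconv F F) γ T hγpos hT
    have hψM : ENNReal.ofReal s₀ < ψ M := by
      rw [hψeq M hM0]
      apply lt_of_lt_of_le hn
      apply lintegral_mono
      intro y
      apply ENNReal.ofReal_le_ofReal
      have : min y (n:ℝ) ≤ min y M := min_le_min le_rfl (le_max_left _ _)
      gcongr
    have hGM : s₀ ≤ G M := by
      have h1 : ENNReal.ofReal s₀ ≤ ψ M := le_of_lt hψM
      have := ENNReal.toReal_mono (hψfin M) h1
      rwa [ENNReal.toReal_ofReal hs₀pos.le] at this
    have hGx₀ : G x₀ ≤ C₀ := by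
      have h1 : ψ x₀ ≤ ENNReal.ofReal C₀ := by
        apply le_trans (hbound x₀ x₀ hx₀pos.le le_rfl)
        apply ENNReal.ofReal_le_ofReal
        simp only [hC₀def]
        have h2 : Real.exp (γ * x₀) ≤ Real.exp x₀ :=
          Real.exp_le_exp.2 (by nlinarith)
        nlinarith [Real.exp_pos (γ * x₀)]
      have := ENNReal.toReal_mono ENNReal.ofReal_ne_top h1
      rwa [ENNReal.toReal_ofReal hC₀pos.le] at this
    -- continuity on [x₀, M]
    have hcont : ContinuousOn G (Set.Icc x₀ M) := by
      apply LipschitzOnWith.continuousOn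
        (K := Real.toNNReal (γ * Real.exp (γ * M)))
      apply LipschitzOnWith.of_dist_le_mul
      intro t ht t' ht'
      have key : ∀ a b : ℝ, a ∈ Set.Icc x₀ M → b ∈ Set.Icc x₀ M → a ≤ b →
          dist (G a) (G b) ≤ (γ * Real.exp (γ * M)) * dist a b := by
        intro a b ha hb hab
        have hGab : G a ≤ G b := hGmono a b hab
        rw [Real.dist_eq, abs_of_nonpos (by linarith), Real.dist_eq,
          abs_of_nonpos (by linarith)]
        have hsplitab := hsplit a b (by linarith [ha.1]) hab
        have hfin2 : (∫⁻ x in Set.Ico a b, g x * tail F x) ≠ ⊤ :=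
          ne_top_of_le_ne_top ENNReal.ofReal_ne_top
            (hincbound a b M (by linarith [ha.1]) hab hb.2)
        have : G b = G a + (∫⁻ x in Set.Ico a b, g x * tail F x).toReal := by
          simp only [hGdef, hsplitab]
          rw [ENNReal.toReal_add (hψfin a) hfin2]
        rw [this]
        have h3 : (∫⁻ x in Set.Ico a b, g x * tail F x).toReal
            ≤ γ * Real.exp (γ * M) * (b - a) := by
          have h4 := hincbound a b M (by linarith [ha.1]) hab hb.2
          have h5 := ENNReal.toReal_mono ENNReal.ofReal_ne_top h4
          rwa [ENNReal.toReal_ofReal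
            (mul_nonneg (by positivity) (by linarith : (0:ℝ) ≤ b - a))] at h5
        linarith
      have hK : ((Real.toNNReal (γ * Real.exp (γ * M)) : ℝ≥0) : ℝ)
          = γ * Real.exp (γ * M) := Real.coe_toNNReal _ (by positivity)
      rcases le_total t t' with htt' | ht't
      · calc dist (G t) (G t') ≤ (γ * Real.exp (γ * M)) * dist t t' := key t t' ht ht' htt'
          _ = _ := by rw [hK]
      · calc dist (G t) (G t') = dist (G t') (G t) := dist_comm _ _
          _ ≤ (γ * Real.exp (γ * M)) * dist t' t := key t' t ht' ht ht't
          _ = (Real.toNNReal (γ * Real.exp (γ * M)) : ℝ) * dist t t' := by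
              rw [hK, dist_comm]
    -- IVT
    obtain ⟨T, hTmem, hGT⟩ : ∃ T ∈ Set.Icc x₀ M, G T = s₀ := by
      have hmem : s₀ ∈ Set.Icc (G x₀) (G M) := ⟨by linarith, hGM⟩
      have := intermediate_value_Icc hx₀M hcont hmem
      obtain ⟨T, hT1, hT2⟩ := this
      exact ⟨T, hT1, hT2⟩
    have hTx₀ : x₀ ≤ T := hTmem.1
    have hT0 : 0 ≤ T := by linarith
    have hψT : ψ T = ENNReal.ofReal s₀ := by
      have := ENNReal.ofReal_toReal (hψfin T)
      rw [show (ψ T).toReal = G T from rfl, hGT] at this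
      exact this.symm
    -- chain
    have hsplitT := hsplit x₀ T hx₀pos hTx₀
    set I : ℝ≥0∞ := ∫⁻ x in Set.Ico x₀ T, g x * tail F x with hIdef
    have hlowI : ENNReal.ofReal (c - ε) * I ≤ ψ₂ T := by
      have h1 : ENNReal.ofReal (c - ε) * I
          = ∫⁻ x in Set.Ico x₀ T, ENNReal.ofReal (c - ε) * (g x * tail F x) := by
        rw [hIdef, lintegral_const_mul _ (show Measurable fun x => g x * tail F x from hgm.mul htailm)]
      rw [h1]
      calc (∫⁻ x in Set.Ico x₀ T, ENNReal.ofReal (c - ε) * (g x * tail F x))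
          ≤ ∫⁻ x in Set.Ico x₀ T, g x * tail (mconv F F) x := by
            apply lintegral_mono_ae
            filter_upwards [ae_restrict_mem measurableSet_Ico] with x hx
            calc ENNReal.ofReal (c - ε) * (g x * tail F x)
                = g x * (ENNReal.ofReal (c - ε) * tail F x) := by ring
              _ ≤ g x * tail (mconv F F) x := mul_le_mul_right (hlow x hx.1) _
        _ ≤ ψ₂ T := by
            apply lintegral_mono_set
            intro x hx
            exact ⟨by linarith [hx.1], hx.2⟩
    have hup : ψ₂ T ≤ 2 * ψ T + ψ T * ψ T := by
      rw [hψ₂eq T hT0, hψeq T hT0]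
      exact aux_prod F hsupp γ T hγpos hT0
    have hψx₀C₀ : ψ x₀ ≤ ENNReal.ofReal C₀ := by
      apply le_trans (hbound x₀ x₀ hx₀pos.le le_rfl)
      apply ENNReal.ofReal_le_ofReal
      simp only [hC₀def]
      have h2 : Real.exp (γ * x₀) ≤ Real.exp x₀ := Real.exp_le_exp.2 (by nlinarith)
      nlinarith [Real.exp_pos (γ * x₀)]
    have hfinal : ENNReal.ofReal ((c - ε) * s₀)
        ≤ ENNReal.ofReal ((c - ε) * C₀ + 2 * s₀ + s₀ * s₀) := by
      have hchain : ENNReal.ofReal (c - ε) * ψ T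
          ≤ ENNReal.ofReal (c - ε) * ψ x₀ + ψ₂ T := by
        rw [hsplitT, mul_add]
        exact add_le_add_right hlowI _
      have hchain2 : ENNReal.ofReal (c - ε) * ψ T
          ≤ ENNReal.ofReal (c - ε) * ENNReal.ofReal C₀
            + (2 * ENNReal.ofReal s₀ + ENNReal.ofReal s₀ * ENNReal.ofReal s₀) := by
        apply le_trans hchain
        apply add_le_add
        · exact mul_le_mul_right hψx₀C₀ _
        · rw [← hψT]
          exact hup
      rw [hψT] at hchain2
      calc ENNReal.ofReal ((c - ε) * s₀)
          = ENNReal.ofReal (c - ε) * ENNReal.ofReal s₀ := by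
            rw [ENNReal.ofReal_mul (by linarith)]
        _ ≤ ENNReal.ofReal (c - ε) * ENNReal.ofReal C₀
            + (2 * ENNReal.ofReal s₀ + ENNReal.ofReal s₀ * ENNReal.ofReal s₀) := hchain2
        _ = ENNReal.ofReal ((c - ε) * C₀ + 2 * s₀ + s₀ * s₀) := by
            have e1 : ENNReal.ofReal (c - ε) * ENNReal.ofReal C₀
                = ENNReal.ofReal ((c - ε) * C₀) :=
              (ENNReal.ofReal_mul (by linarith : (0:ℝ) ≤ c - ε)).symm
            have e2 : (2:ℝ≥0∞) * ENNReal.ofReal s₀ = ENNReal.ofReal (2 * s₀) := by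
              rw [ENNReal.ofReal_mul (by norm_num : (0:ℝ) ≤ 2)]
              norm_num
            have e3 : ENNReal.ofReal s₀ * ENNReal.ofReal s₀ = ENNReal.ofReal (s₀ * s₀) :=
              (ENNReal.ofReal_mul hs₀pos.le).symm
            rw [e1, e2, e3,
              ← ENNReal.ofReal_add (mul_nonneg (by norm_num : (0:ℝ) ≤ 2) hs₀pos.le)
                (mul_nonneg hs₀pos.le hs₀pos.le),
              ← ENNReal.ofReal_add (mul_nonneg hcε.le hC₀pos.le)
                (add_nonneg (mul_nonneg (by norm_num : (0:ℝ) ≤ 2) hs₀pos.le)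
                  (mul_nonneg hs₀pos.le hs₀pos.le))]
            apply congrArg ENNReal.ofReal
            ring
    have hreal : (c - ε) * s₀ ≤ (c - ε) * C₀ + 2 * s₀ + s₀ * s₀ :=
      (ENNReal.ofReal_le_ofReal_iff
        (add_nonneg (add_nonneg (mul_nonneg hcε.le hC₀pos.le)
          (mul_nonneg (by norm_num : (0:ℝ) ≤ 2) hs₀pos.le))
          (mul_nonneg hs₀pos.le hs₀pos.le))).1 hfinal
    -- numeric contradiction
    have hCη : (c - ε) * C₀ ≤ (c - 2) * s₀ / 8 := by
      have h1 : (c - ε) * C₀ ≤ c * C₀ := by nlinarith [hεpos.le, hC₀pos.le]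
      have h2 : c * C₀ ≤ c * η := mul_le_mul_of_nonneg_left hC₀η hc.le
      have h3 : c * η = (c - 2) * s₀ / 8 := by
        simp only [hηdef]; field_simp
      linarith
    simp only [hεdef, hs₀def] at hreal hCη
    nlinarith [hreal, hCη]
  have hc2 : c = 2 := le_antisymm hle hge
  refine ⟨hc2, ?_⟩
  have : ENNReal.ofReal c = 2 := by rw [hc2]; norm_num
  rwa [this] at h
end
end

section
/- If F belongs to the class S(γ̂) (with γ̂ the abscissa of convergence of its Laplace transform φ), then for any β ∈ [0, γ̂], the tilted distribution G(du) = e^{βu} F(du)/φ(β) belongs to S(γ̂ − β). In particular, the distribution with G(du) = e^{γ̂u} F(du)/φ(γ̂) is subexponential. -/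
open MeasureTheory Filter Real Set
open scoped ENNReal Topology

noncomputable section

/-- Exponential tilting: G(du) = e^{γu} F(du)/φ(γ). -/
def tilt (F : MeasureTheory.Measure ℝ) (γ : ℝ) : MeasureTheory.Measure ℝ :=
  (phi F γ)⁻¹ • F.withDensity (fun u => ENNReal.ofReal (Real.exp (γ * u)))

/-- The class S(γ): φ(γ) < ∞, F̄(x+y)/F̄(x) → e^{−γy}, and (F*F)‾(x) ~ 2φ(γ)F̄(x). -/
def memS (F : MeasureTheory.Measure ℝ) (γ : ℝ) : Prop :=
  phi F γ < ⊤ ∧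
  (∀ y : ℝ, Tendsto (fun x : ℝ => tail F (x + y) / tail F x) atTop
    (𝓝 (ENNReal.ofReal (Real.exp (-γ * y))))) ∧
  Tendsto (fun x : ℝ => tail (mconv F F) x / tail F x) atTop (𝓝 (2 * phi F γ))

set_option linter.unusedSectionVars false

namespace Stmt13Aux

lemma div_mul_div' {a b c d : ℝ≥0∞} (hc0 : c ≠ 0) (hc : c ≠ ⊤) :
    (a * b) / (c * d) = (a / c) * (b / d) := by
  rw [div_eq_mul_inv, ENNReal.mul_inv (Or.inl hc0) (Or.inl hc), div_eq_mul_inv, div_eq_mul_inv,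
    mul_mul_mul_comm]

lemma tendsto_div_iff_bounds {a b : ℝ → ℝ≥0∞} {c : ℝ≥0∞} (hc : c ≠ ⊤)
    (hb0 : ∀ x, b x ≠ 0) (hbt : ∀ x, b x ≠ ⊤) :
    Tendsto (fun x => a x / b x) atTop (𝓝 c) ↔
      ∀ ε : ℝ≥0∞, 0 < ε → ∀ᶠ x in atTop, a x ≤ (c + ε) * b x ∧ (c - ε) * b x ≤ a x := by
  rw [ENNReal.tendsto_nhds hc]
  constructor
  · intro H ε hε
    rcases eq_or_ne ε ⊤ with rfl | hεt
    · refine Eventually.of_forall fun x => ⟨?_, ?_⟩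
      · rw [add_top, ENNReal.top_mul (hb0 x)]; exact le_top
      · rw [tsub_eq_zero_of_le le_top, zero_mul]; exact zero_le
    · filter_upwards [H ε hε] with x hx
      exact ⟨(ENNReal.div_le_iff (hb0 x) (hbt x)).1 hx.2,
        (ENNReal.le_div_iff_mul_le (Or.inl (hb0 x)) (Or.inl (hbt x))).1 hx.1⟩
  · intro H ε hε
    filter_upwards [H ε hε] with x hx
    exact ⟨(ENNReal.le_div_iff_mul_le (Or.inl (hb0 x)) (Or.inl (hbt x))).2 hx.2,
      (ENNReal.div_le_iff (hb0 x) (hbt x)).2 hx.1⟩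

/-- measurability of the exponential density -/
lemma meas_exp (c : ℝ) : Measurable fun u : ℝ => ENNReal.ofReal (Real.exp (c * u)) :=
  (Real.continuous_exp.measurable.comp (measurable_id.const_mul c)).ennreal_ofReal

lemma meas_tail (F : MeasureTheory.Measure ℝ) : Measurable (tail F) := by
  have : Antitone (tail F) := fun x y hxy => measure_mono (Set.Ioi_subset_Ioi hxy)
  exact this.measurable

/-- the truncated exponential moment -/
def mexp (F : MeasureTheory.Measure ℝ) (β x : ℝ) : ℝ≥0∞ :=
  ∫⁻ u in Set.Ioi x, ENNReal.ofReal (Real.exp (β * u)) ∂F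

variable {F : MeasureTheory.Measure ℝ} [MeasureTheory.IsProbabilityMeasure F]

lemma tail_ne_top (F : MeasureTheory.Measure ℝ) [MeasureTheory.IsProbabilityMeasure F] (x : ℝ) :
    tail F x ≠ ⊤ :=
  (measure_lt_top F _).ne

lemma ae_nonneg (hsupp : F (Set.Iio 0) = 0) : ∀ᵐ u ∂F, 0 ≤ u := by
  rw [ae_iff]
  convert hsupp using 2
  ext u
  simp [Set.mem_Iio, not_le]

lemma phi_mono (hsupp : F (Set.Iio 0) = 0) {β γ : ℝ} (h : β ≤ γ) : phi F β ≤ phi F γ := by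
  refine lintegral_mono_ae ?_
  filter_upwards [ae_nonneg hsupp] with u hu
  exact ENNReal.ofReal_le_ofReal (Real.exp_le_exp.2 (mul_le_mul_of_nonneg_right h hu))

lemma one_le_phi (hsupp : F (Set.Iio 0) = 0) {β : ℝ} (hβ : 0 ≤ β) : 1 ≤ phi F β := by
  have : (1 : ℝ≥0∞) = ∫⁻ _, 1 ∂F := by simp
  rw [this]
  refine lintegral_mono_ae ?_
  filter_upwards [ae_nonneg hsupp] with u hu
  simpa using ENNReal.ofReal_le_ofReal (Real.one_le_exp (mul_nonneg hβ hu))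

lemma phi_ne_zero (hsupp : F (Set.Iio 0) = 0) {β : ℝ} (hβ : 0 ≤ β) : phi F β ≠ 0 :=
  (zero_lt_one.trans_le (one_le_phi hsupp hβ)).ne'

lemma mexp_le_phi {β x : ℝ} : mexp F β x ≤ phi F β :=
  setLIntegral_le_lintegral _ _

lemma le_mexp (hβ : 0 ≤ β) (x : ℝ) :
    ENNReal.ofReal (Real.exp (β * x)) * tail F x ≤ mexp F β x := by
  simp only [tail]
  rw [← setLIntegral_const]
  refine setLIntegral_mono (meas_exp β) fun u hu => ?_
  exact ENNReal.ofReal_le_ofReal (Real.exp_le_exp.2 (mul_le_mul_of_nonneg_left (le_of_lt hu) hβ))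

lemma mexp_ne_zero (hub : ∀ x : ℝ, tail F x ≠ 0) (hβ : 0 ≤ β) (x : ℝ) : mexp F β x ≠ 0 := by
  intro h
  have h1 := le_mexp (F := F) hβ x
  rw [h] at h1
  have := le_antisymm h1 zero_le
  exact hub x (by
    rcases mul_eq_zero.1 this with h2 | h2
    · exact absurd h2 (by positivity)
    · exact h2)


/-- pointwise fundamental theorem of calculus step -/
lemma exp_decomp {β x u : ℝ} (hβ : 0 ≤ β) (hu : x < u) :
    ENNReal.ofReal (Real.exp (β * u)) =
      ENNReal.ofReal (Real.exp (β * x)) +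
        ∫⁻ t in Set.Ioo x u, ENNReal.ofReal (β * Real.exp (β * t)) ∂volume := by
  have cont : Continuous fun t : ℝ => β * Real.exp (β * t) :=
    continuous_const.mul (Real.continuous_exp.comp (continuous_const.mul continuous_id))
  have hD : ∀ t ∈ Set.uIcc x u, HasDerivAt (fun t => Real.exp (β * t)) (β * Real.exp (β * t)) t := by
    intro t _
    have := ((hasDerivAt_id t).const_mul β).exp
    simpa [mul_comm] using this
  have h1 : ∫ t in x..u, β * Real.exp (β * t) = Real.exp (β * u) - Real.exp (β * x) :=
    intervalIntegral.integral_eq_sub_of_hasDerivAt hD (cont.intervalIntegrable _ _)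
  rw [intervalIntegral.integral_of_le hu.le, integral_Ioc_eq_integral_Ioo] at h1
  have h2 : ENNReal.ofReal (Real.exp (β * u) - Real.exp (β * x)) =
      ∫⁻ t in Set.Ioo x u, ENNReal.ofReal (β * Real.exp (β * t)) ∂volume := by
    rw [← h1]
    refine ofReal_integral_eq_lintegral_ofReal ?_ ?_
    · exact (cont.integrableOn_Icc).mono_set Set.Ioo_subset_Icc_self
    · exact Filter.Eventually.of_forall fun t => by positivity
  rw [← h2, ← ENNReal.ofReal_add (Real.exp_pos _).le (by
      have : Real.exp (β * x) ≤ Real.exp (β * u) :=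
        Real.exp_le_exp.2 (mul_le_mul_of_nonneg_left hu.le hβ)
      linarith)]
  congr 1
  ring

/-- integration by parts / layer-cake representation of the truncated exponential moment -/
lemma rep (μ : MeasureTheory.Measure ℝ) [MeasureTheory.IsFiniteMeasure μ] {β : ℝ} (hβ : 0 ≤ β)
    (x : ℝ) :
    (∫⁻ u in Set.Ioi x, ENNReal.ofReal (Real.exp (β * u)) ∂μ)
      = ENNReal.ofReal (Real.exp (β * x)) * μ (Set.Ioi x)
        + ∫⁻ t in Set.Ioi x, ENNReal.ofReal (β * Real.exp (β * t)) * μ (Set.Ioi t) ∂volume := by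
  set g : ℝ → ℝ≥0∞ := fun t => ENNReal.ofReal (β * Real.exp (β * t)) with hg
  have gmeas : Measurable g :=
    (continuous_const.mul (Real.continuous_exp.comp (continuous_const.mul continuous_id))).measurable.ennreal_ofReal
  set S : Set (ℝ × ℝ) := {q : ℝ × ℝ | x < q.2 ∧ q.2 < q.1} with hS
  have Smeas : MeasurableSet S :=
    (measurableSet_lt measurable_const measurable_snd).inter
      (measurableSet_lt measurable_snd measurable_fst)
  set Φ : ℝ × ℝ → ℝ≥0∞ := S.indicator (fun q => g q.2) with hΦ
  have Φmeas : Measurable Φ := (gmeas.comp measurable_snd).indicator Smeas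
  have step1 : (∫⁻ u in Set.Ioi x, ENNReal.ofReal (Real.exp (β * u)) ∂μ)
      = ∫⁻ u in Set.Ioi x,
          (ENNReal.ofReal (Real.exp (β * x)) + ∫⁻ t, Φ (u, t) ∂volume) ∂μ := by
    refine setLIntegral_congr_fun measurableSet_Ioi (fun u hu => ?_)
    have : (∫⁻ t, Φ (u, t) ∂volume) = ∫⁻ t in Set.Ioo x u, g t ∂volume := by
      rw [← lintegral_indicator measurableSet_Ioo]
      refine lintegral_congr fun t => ?_
      by_cases ht : t ∈ Set.Ioo x u
      · rw [Set.indicator_of_mem ht]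
        exact Set.indicator_of_mem (by simpa [hS, Set.mem_Ioo] using ht) _
      · rw [Set.indicator_of_notMem ht]
        exact Set.indicator_of_notMem (by simpa [hS, Set.mem_Ioo] using ht) _
    rw [this]
    exact exp_decomp hβ hu
  rw [step1, lintegral_add_left measurable_const, setLIntegral_const]
  congr 1
  -- swap the double integral
  have swap : ∫⁻ u in Set.Ioi x, (∫⁻ t, Φ (u, t) ∂volume) ∂μ
      = ∫⁻ t, (∫⁻ u in Set.Ioi x, Φ (u, t) ∂μ) ∂volume := by
    exact lintegral_lintegral_swap (Φmeas.aemeasurable)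
  rw [swap]
  have inner : ∀ t, (∫⁻ u in Set.Ioi x, Φ (u, t) ∂μ)
      = (Set.Ioi x).indicator (fun t => g t * μ (Set.Ioi t)) t := by
    intro t
    by_cases ht : x < t
    · have hpt : ∀ u, Φ (u, t) = (Set.Ioi t).indicator (fun _ => g t) u := by
        intro u
        simp only [hΦ, hS, Set.indicator_apply, Set.mem_setOf_eq, Set.mem_Ioi, ht, true_and]
      rw [lintegral_congr hpt, lintegral_indicator measurableSet_Ioi, setLIntegral_const,
        Measure.restrict_apply measurableSet_Ioi,
        Set.inter_eq_self_of_subset_left (Set.Ioi_subset_Ioi ht.le),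
        Set.indicator_of_mem (Set.mem_Ioi.2 ht)]
    · have hpt : ∀ u, Φ (u, t) = 0 := fun u =>
        Set.indicator_of_notMem (fun h => ht h.1) _
      rw [lintegral_congr hpt, lintegral_zero,
        Set.indicator_of_notMem (by simpa using ht)]
  rw [lintegral_congr inner, lintegral_indicator measurableSet_Ioi]

lemma tilt_tail (β x : ℝ) : tail (tilt F β) x = (phi F β)⁻¹ * mexp F β x := by
  simp only [tail, tilt, MeasureTheory.Measure.smul_apply, smul_eq_mul,
    withDensity_apply _ measurableSet_Ioi, mexp]

lemma tilt_phi (β δ : ℝ) : phi (tilt F β) δ = (phi F β)⁻¹ * phi F (β + δ) := by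
  simp only [phi, tilt]
  rw [lintegral_smul_measure, lintegral_withDensity_eq_lintegral_mul _ (meas_exp β) (meas_exp δ)]
  congr 1
  refine lintegral_congr fun u => ?_
  simp only [Pi.mul_apply]
  rw [← ENNReal.ofReal_mul (Real.exp_pos _).le, ← Real.exp_add]
  congr 2
  ring

lemma tilt_zero : tilt F 0 = F := by
  have h0 : phi F 0 = 1 := by
    simp [phi, measure_univ]
  have h1 : (fun u : ℝ => ENNReal.ofReal (Real.exp (0 * u))) = (1 : ℝ → ℝ≥0∞) := by
    funext u; simp
  rw [tilt, h0, h1, withDensity_one, inv_one, one_smul]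

lemma shift_lintegral (g : ℝ → ℝ≥0∞) (x : ℝ) :
    ∫⁻ s in Set.Ioi 0, g (x + s) ∂volume = ∫⁻ t in Set.Ioi x, g t ∂volume := by
  have h := (measurePreserving_add_left volume x).setLIntegral_comp_preimage_emb
      (measurableEmbedding_addLeft x) g (Set.Ioi x)
  rw [← h]
  congr 1
  ext s
  simp

variable {γ : ℝ}

lemma tail_bounds (hub : ∀ x : ℝ, tail F x ≠ 0)
    (hF2 : ∀ y : ℝ, Tendsto (fun x : ℝ => tail F (x + y) / tail F x) atTop
      (𝓝 (ENNReal.ofReal (Real.exp (-γ * y))))) (y : ℝ) :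
    ∀ ε : ℝ≥0∞, 0 < ε → ∀ᶠ x in atTop,
      tail F (x + y) ≤ (ENNReal.ofReal (Real.exp (-γ * y)) + ε) * tail F x ∧
      (ENNReal.ofReal (Real.exp (-γ * y)) - ε) * tail F x ≤ tail F (x + y) :=
  (tendsto_div_iff_bounds ENNReal.ofReal_ne_top hub (tail_ne_top F)).1 (hF2 y)

lemma potter (hub : ∀ x : ℝ, tail F x ≠ 0)
    (hF2 : ∀ y : ℝ, Tendsto (fun x : ℝ => tail F (x + y) / tail F x) atTop
      (𝓝 (ENNReal.ofReal (Real.exp (-γ * y))))) {ρ : ℝ} (hρ : ρ < γ) :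
    ∃ x₀ : ℝ, ∀ x ≥ x₀, ∀ s ≥ 0,
      tail F (x + s) ≤ ENNReal.ofReal (Real.exp (max ρ 0) * Real.exp (-ρ * s)) * tail F x := by
  rcases le_or_gt ρ 0 with hρ0 | hρ0
  · refine ⟨0, fun x _ s hs => ?_⟩
    have h1 : tail F (x + s) ≤ tail F x := measure_mono (Set.Ioi_subset_Ioi (by linarith))
    have h2 : (1 : ℝ≥0∞) ≤ ENNReal.ofReal (Real.exp (max ρ 0) * Real.exp (-ρ * s)) := by
      rw [max_eq_right hρ0, Real.exp_zero, one_mul]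
      exact ENNReal.one_le_ofReal.2 (Real.one_le_exp (by nlinarith))
    calc tail F (x + s) ≤ tail F x := h1
      _ = 1 * tail F x := (one_mul _).symm
      _ ≤ _ := mul_le_mul_left h2 _
  · have hlt : ENNReal.ofReal (Real.exp (-γ * 1)) < ENNReal.ofReal (Real.exp (-ρ)) := by
      rw [ENNReal.ofReal_lt_ofReal_iff (Real.exp_pos _)]
      exact Real.exp_lt_exp.2 (by linarith)
    obtain ⟨x₀, hx₀⟩ := eventually_atTop.1 ((hF2 1).eventually_lt_const hlt)
    have step : ∀ x ≥ x₀, tail F (x + 1) ≤ ENNReal.ofReal (Real.exp (-ρ)) * tail F x := by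
      intro x hx
      have h := (hx₀ x hx).le
      rwa [ENNReal.div_le_iff (hub x) (tail_ne_top F x)] at h
    have iterate : ∀ n : ℕ, ∀ x ≥ x₀,
        tail F (x + n) ≤ ENNReal.ofReal (Real.exp (-ρ)) ^ n * tail F x := by
      intro n
      induction n with
      | zero => simp
      | succ n ih =>
        intro x hx
        have h2 : (x + (n + 1 : ℕ) : ℝ) = (x + n) + 1 := by push_cast; ring
        rw [h2]
        calc tail F ((x + n) + 1) ≤ ENNReal.ofReal (Real.exp (-ρ)) * tail F (x + n) :=
              step _ (by have : (0:ℝ) ≤ n := Nat.cast_nonneg n; linarith)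
          _ ≤ ENNReal.ofReal (Real.exp (-ρ)) * (ENNReal.ofReal (Real.exp (-ρ)) ^ n * tail F x) :=
              mul_le_mul_right (ih x hx) _
          _ = ENNReal.ofReal (Real.exp (-ρ)) ^ (n + 1) * tail F x := by ring
    refine ⟨x₀, fun x hx s hs => ?_⟩
    set n := Nat.floor s with hn
    have hn1 : (n : ℝ) ≤ s := Nat.floor_le hs
    have hn2 : s < n + 1 := Nat.lt_floor_add_one s
    calc tail F (x + s) ≤ tail F (x + n) := measure_mono (Set.Ioi_subset_Ioi (by linarith))
      _ ≤ ENNReal.ofReal (Real.exp (-ρ)) ^ n * tail F x := iterate n x hx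
      _ ≤ ENNReal.ofReal (Real.exp (max ρ 0) * Real.exp (-ρ * s)) * tail F x := by
          refine mul_le_mul_left ?_ _
          rw [← ENNReal.ofReal_pow (Real.exp_pos _).le, ← Real.exp_nat_mul]
          refine ENNReal.ofReal_le_ofReal ?_
          rw [← Real.exp_add]
          refine Real.exp_le_exp.2 ?_
          rw [max_eq_left hρ0.le]
          nlinarith

/-- the function h(x) = e^{γx} F̄(x) -/
def hfun (F : MeasureTheory.Measure ℝ) (γ x : ℝ) : ℝ≥0∞ :=
  ENNReal.ofReal (Real.exp (γ * x)) * tail F x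

lemma hfun_ne_zero (hub : ∀ x : ℝ, tail F x ≠ 0) (x : ℝ) : hfun F γ x ≠ 0 :=
  mul_ne_zero (by simp [Real.exp_pos]) (hub x)

lemma hfun_ne_top (x : ℝ) : hfun F γ x ≠ ⊤ :=
  ENNReal.mul_ne_top ENNReal.ofReal_ne_top (tail_ne_top F x)

lemma hfun_div (hub : ∀ x : ℝ, tail F x ≠ 0) (x y : ℝ) :
    hfun F γ (x + y) / hfun F γ x
      = ENNReal.ofReal (Real.exp (γ * y)) * (tail F (x + y) / tail F x) := by
  rw [hfun, hfun, div_mul_div' (by simp [Real.exp_pos]) ENNReal.ofReal_ne_top,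
    ← ENNReal.ofReal_div_of_pos (Real.exp_pos _), ← Real.exp_sub]
  congr 3
  ring

lemma hfun_div_tendsto_one (hub : ∀ x : ℝ, tail F x ≠ 0)
    (hF2 : ∀ y : ℝ, Tendsto (fun x : ℝ => tail F (x + y) / tail F x) atTop
      (𝓝 (ENNReal.ofReal (Real.exp (-γ * y))))) (y : ℝ) :
    Tendsto (fun x => hfun F γ (x + y) / hfun F γ x) atTop (𝓝 1) := by
  have hne : ENNReal.ofReal (Real.exp (-γ * y)) ≠ 0 := by
    simp [ENNReal.ofReal_eq_zero, not_le, Real.exp_pos]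
  have h := ENNReal.Tendsto.const_mul (a := ENNReal.ofReal (Real.exp (γ * y))) (hF2 y)
    (Or.inl hne)
  have h2 : ENNReal.ofReal (Real.exp (γ * y)) * ENNReal.ofReal (Real.exp (-γ * y)) = 1 := by
    rw [← ENNReal.ofReal_mul (Real.exp_pos _).le, ← Real.exp_add]
    norm_num
  rw [h2] at h
  exact h.congr fun x => (hfun_div hub x y).symm

/-- J(x) = ∫_0^∞ e^{-(γ-β)s} h(x+s)/h(x) ds -/
def Jfun (F : MeasureTheory.Measure ℝ) (γ β x : ℝ) : ℝ≥0∞ :=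
  ∫⁻ s in Set.Ioi 0, ENNReal.ofReal (Real.exp (-(γ - β) * s)) *
    (hfun F γ (x + s) / hfun F γ x) ∂volume

def Pfun (F : MeasureTheory.Measure ℝ) (γ β x : ℝ) : ℝ≥0∞ :=
  ENNReal.ofReal (Real.exp (-(γ - β) * x)) * hfun F γ x

def Kfun (F : MeasureTheory.Measure ℝ) (γ β x : ℝ) : ℝ≥0∞ :=
  1 + ENNReal.ofReal β * Jfun F γ β x

lemma Pfun_ne_zero (hub : ∀ x : ℝ, tail F x ≠ 0) (β x : ℝ) : Pfun F γ β x ≠ 0 :=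
  mul_ne_zero (by simp [ENNReal.ofReal_eq_zero, not_le, Real.exp_pos]) (hfun_ne_zero hub x)

lemma Pfun_ne_top (β x : ℝ) : Pfun F γ β x ≠ ⊤ :=
  ENNReal.mul_ne_top ENNReal.ofReal_ne_top (hfun_ne_top x)

lemma one_le_Kfun (β x : ℝ) : 1 ≤ Kfun F γ β x := self_le_add_right _ _

lemma Kfun_ne_zero (β x : ℝ) : Kfun F γ β x ≠ 0 := by
  intro h
  have h1 := one_le_Kfun (F := F) (γ := γ) β x
  rw [h] at h1
  simp at h1

/-- the key decomposition m_β(x) = P(x) K(x) -/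
lemma decompA (hub : ∀ x : ℝ, tail F x ≠ 0) {β : ℝ} (hβ : 0 ≤ β) (x : ℝ) :
    mexp F β x = Pfun F γ β x * Kfun F γ β x := by
  have hrep := rep F hβ x
  have key : ∀ s : ℝ, Pfun F γ β x *
      (ENNReal.ofReal (Real.exp (-(γ - β) * s)) * (hfun F γ (x + s) / hfun F γ x))
      = ENNReal.ofReal (Real.exp (β * (x + s))) * tail F (x + s) := by
    intro s
    rw [div_eq_mul_inv, Pfun, hfun, hfun]
    have hc : ENNReal.ofReal (Real.exp (γ * x)) * tail F x ≠ 0 :=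
      hfun_ne_zero hub x
    have hc' : ENNReal.ofReal (Real.exp (γ * x)) * tail F x ≠ ⊤ := hfun_ne_top x
    calc ENNReal.ofReal (Real.exp (-(γ - β) * x)) * (ENNReal.ofReal (Real.exp (γ * x)) * tail F x) *
          (ENNReal.ofReal (Real.exp (-(γ - β) * s)) *
            (ENNReal.ofReal (Real.exp (γ * (x + s))) * tail F (x + s) *
              (ENNReal.ofReal (Real.exp (γ * x)) * tail F x)⁻¹))
        = (ENNReal.ofReal (Real.exp (γ * x)) * tail F x) *
            (ENNReal.ofReal (Real.exp (γ * x)) * tail F x)⁻¹ *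
            (ENNReal.ofReal (Real.exp (-(γ - β) * x)) * ENNReal.ofReal (Real.exp (-(γ - β) * s)) *
              ENNReal.ofReal (Real.exp (γ * (x + s))) * tail F (x + s)) := by ring
      _ = ENNReal.ofReal (Real.exp (-(γ - β) * x)) * ENNReal.ofReal (Real.exp (-(γ - β) * s)) *
              ENNReal.ofReal (Real.exp (γ * (x + s))) * tail F (x + s) := by
            rw [ENNReal.mul_inv_cancel hc hc', one_mul]
      _ = ENNReal.ofReal (Real.exp (β * (x + s))) * tail F (x + s) := by
            rw [← ENNReal.ofReal_mul (Real.exp_pos _).le, ← ENNReal.ofReal_mul (by positivity)]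
            congr 2
            rw [← Real.exp_add, ← Real.exp_add]
            congr 1
            ring
  have key2 : Pfun F γ β x * (ENNReal.ofReal β * Jfun F γ β x)
      = ∫⁻ t in Set.Ioi x, ENNReal.ofReal (β * Real.exp (β * t)) * tail F t ∂volume := by
    have h1 : Pfun F γ β x * Jfun F γ β x
        = ∫⁻ s in Set.Ioi 0, ENNReal.ofReal (Real.exp (β * (x + s))) * tail F (x + s) ∂volume := by
      rw [Jfun, ← lintegral_const_mul' _ _ (Pfun_ne_top β x)]
      exact lintegral_congr fun s => key s
    have h2 : (∫⁻ s in Set.Ioi 0, ENNReal.ofReal (Real.exp (β * (x + s))) * tail F (x + s) ∂volume)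
        = ∫⁻ t in Set.Ioi x, ENNReal.ofReal (Real.exp (β * t)) * tail F t ∂volume :=
      shift_lintegral (fun t => ENNReal.ofReal (Real.exp (β * t)) * tail F t) x
    calc Pfun F γ β x * (ENNReal.ofReal β * Jfun F γ β x)
        = ENNReal.ofReal β * (Pfun F γ β x * Jfun F γ β x) := by ring
      _ = ENNReal.ofReal β * ∫⁻ t in Set.Ioi x, ENNReal.ofReal (Real.exp (β * t)) * tail F t ∂volume := by
          rw [h1, h2]
      _ = ∫⁻ t in Set.Ioi x, ENNReal.ofReal (β * Real.exp (β * t)) * tail F t ∂volume := by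
          rw [← lintegral_const_mul' _ _ ENNReal.ofReal_ne_top]
          refine lintegral_congr fun t => ?_
          rw [← mul_assoc, ← ENNReal.ofReal_mul hβ]
  have hP1 : Pfun F γ β x = ENNReal.ofReal (Real.exp (β * x)) * tail F x := by
    rw [Pfun, hfun, ← mul_assoc, ← ENNReal.ofReal_mul (Real.exp_pos _).le, ← Real.exp_add]
    congr 3
    ring
  rw [Kfun, mul_add, mul_one, key2, hP1, mexp, hrep]
  rfl

lemma lintegral_exp_neg_ne_top {b : ℝ} (hb : 0 < b) :
    (∫⁻ s in Set.Ioi 0, ENNReal.ofReal (Real.exp (-b * s)) ∂volume) ≠ ⊤ := by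
  rw [← ofReal_integral_eq_lintegral_ofReal (exp_neg_integrableOn_Ioi 0 hb)
    (Filter.Eventually.of_forall fun s => (Real.exp_pos _).le)]
  exact ENNReal.ofReal_ne_top

lemma J_tendsto (hub : ∀ x : ℝ, tail F x ≠ 0)
    (hF2 : ∀ y : ℝ, Tendsto (fun x : ℝ => tail F (x + y) / tail F x) atTop
      (𝓝 (ENNReal.ofReal (Real.exp (-γ * y))))) {β : ℝ} (hβγ : β < γ) :
    Tendsto (fun x => Jfun F γ β x) atTop
      (𝓝 (∫⁻ s in Set.Ioi 0, ENNReal.ofReal (Real.exp (-(γ - β) * s)) ∂volume)) := by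
  obtain ⟨x₀, hx₀⟩ := potter hub hF2 (ρ := γ - (γ - β) / 2) (by linarith)
  have hmeas : ∀ x : ℝ, Measurable fun s : ℝ =>
      ENNReal.ofReal (Real.exp (-(γ - β) * s)) * (hfun F γ (x + s) / hfun F γ x) := by
    intro x
    refine (meas_exp _).mul (Measurable.div ?_ measurable_const)
    exact ((meas_exp γ).mul (meas_tail F)).comp (measurable_const.add measurable_id)
  refine tendsto_lintegral_filter_of_dominated_convergence
    (fun s => ENNReal.ofReal (Real.exp (max (γ - (γ - β) / 2) 0)) *
      ENNReal.ofReal (Real.exp (-((γ - β) / 2) * s)))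
    (Filter.Eventually.of_forall hmeas) ?_ ?_ ?_
  · -- domination
    filter_upwards [eventually_ge_atTop x₀] with x hx
    filter_upwards [ae_restrict_mem measurableSet_Ioi] with s hs
    have hs0 : (0:ℝ) ≤ s := (Set.mem_Ioi.1 hs).le
    have htail : tail F (x + s) / tail F x
        ≤ ENNReal.ofReal (Real.exp (max (γ - (γ - β) / 2) 0) * Real.exp (-(γ - (γ - β) / 2) * s)) :=
      (ENNReal.div_le_iff (hub x) (tail_ne_top F x)).2 (hx₀ x hx s hs0)
    calc ENNReal.ofReal (Real.exp (-(γ - β) * s)) * (hfun F γ (x + s) / hfun F γ x)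
        = ENNReal.ofReal (Real.exp (-(γ - β) * s)) *
            (ENNReal.ofReal (Real.exp (γ * s)) * (tail F (x + s) / tail F x)) := by
          rw [hfun_div hub]
      _ ≤ ENNReal.ofReal (Real.exp (-(γ - β) * s)) * (ENNReal.ofReal (Real.exp (γ * s)) *
            ENNReal.ofReal (Real.exp (max (γ - (γ - β) / 2) 0) * Real.exp (-(γ - (γ - β) / 2) * s))) := by
          gcongr
      _ = ENNReal.ofReal (Real.exp (max (γ - (γ - β) / 2) 0)) *
            ENNReal.ofReal (Real.exp (-((γ - β) / 2) * s)) := by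
          rw [← ENNReal.ofReal_mul (Real.exp_pos _).le, ← ENNReal.ofReal_mul (Real.exp_pos _).le,
            ← ENNReal.ofReal_mul (Real.exp_pos _).le]
          congr 1
          simp only [← Real.exp_add]
          congr 1
          ring
  · -- finiteness of the bound
    rw [lintegral_const_mul' _ _ ENNReal.ofReal_ne_top]
    exact ENNReal.mul_ne_top ENNReal.ofReal_ne_top (lintegral_exp_neg_ne_top (by linarith))
  · -- pointwise convergence
    refine (ae_restrict_mem measurableSet_Ioi).mono fun s _ => ?_
    have h := ENNReal.Tendsto.const_mul (a := ENNReal.ofReal (Real.exp (-(γ - β) * s)))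
      (hfun_div_tendsto_one hub hF2 s) (Or.inl one_ne_zero)
    simpa using h

lemma mexp_ne_top (hsupp : F (Set.Iio 0) = 0) (hF1 : phi F γ < ⊤) {β : ℝ} (hβγ : β ≤ γ)
    (x : ℝ) : mexp F β x ≠ ⊤ :=
  (lt_of_le_of_lt (le_trans mexp_le_phi (phi_mono hsupp hβγ)) hF1).ne

lemma Kfun_ne_top (hsupp : F (Set.Iio 0) = 0) (hub : ∀ x : ℝ, tail F x ≠ 0)
    (hF1 : phi F γ < ⊤) {β : ℝ} (hβ : 0 ≤ β) (hβγ : β ≤ γ) (x : ℝ) : Kfun F γ β x ≠ ⊤ := by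
  intro h
  have hd := decompA (γ := γ) hub hβ x
  rw [h, ENNReal.mul_top (Pfun_ne_zero hub β x)] at hd
  exact mexp_ne_top hsupp hF1 hβγ x hd

/-- main ratio limit, case β < γ -/
lemma mexp_ratio_tendsto_pos (hsupp : F (Set.Iio 0) = 0) (hub : ∀ x : ℝ, tail F x ≠ 0)
    (hF1 : phi F γ < ⊤)
    (hF2 : ∀ y : ℝ, Tendsto (fun x : ℝ => tail F (x + y) / tail F x) atTop
      (𝓝 (ENNReal.ofReal (Real.exp (-γ * y))))) {β : ℝ} (hβ : 0 ≤ β) (hβγ : β < γ) (y : ℝ) :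
    Tendsto (fun x => mexp F β (x + y) / mexp F β x) atTop
      (𝓝 (ENNReal.ofReal (Real.exp (-(γ - β) * y)))) := by
  set j := ∫⁻ s in Set.Ioi 0, ENNReal.ofReal (Real.exp (-(γ - β) * s)) ∂volume with hjdef
  have hjtop : j ≠ ⊤ := lintegral_exp_neg_ne_top (by linarith)
  set L := 1 + ENNReal.ofReal β * j with hLdef
  have hLtop : L ≠ ⊤ :=
    ENNReal.add_ne_top.2 ⟨ENNReal.one_ne_top, ENNReal.mul_ne_top ENNReal.ofReal_ne_top hjtop⟩
  have hL0 : L ≠ 0 := (zero_lt_one.trans_le (self_le_add_right 1 _)).ne'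
  have hK : Tendsto (fun x => Kfun F γ β x) atTop (𝓝 L) := by
    have h1 := ENNReal.Tendsto.const_mul (a := ENNReal.ofReal β)
      (J_tendsto hub hF2 hβγ) (Or.inr ENNReal.ofReal_ne_top)
    exact Tendsto.const_add 1 h1
  have hKy : Tendsto (fun x => Kfun F γ β (x + y)) atTop (𝓝 L) :=
    hK.comp (tendsto_atTop_add_const_right atTop y tendsto_id)
  have hKinv : Tendsto (fun x => (Kfun F γ β x)⁻¹) atTop (𝓝 L⁻¹) :=
    ENNReal.tendsto_inv_iff.2 hK
  have t2 : Tendsto (fun x => Kfun F γ β (x + y) * (Kfun F γ β x)⁻¹) atTop (𝓝 1) := by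
    have h1 := ENNReal.Tendsto.mul hKy (Or.inl hL0) hKinv
      (Or.inl (ENNReal.inv_ne_zero.2 hLtop))
    rwa [ENNReal.mul_inv_cancel hL0 hLtop] at h1
  have hc0 : ENNReal.ofReal (Real.exp (-(γ - β) * y)) ≠ 0 := by
    simp [ENNReal.ofReal_eq_zero, not_le, Real.exp_pos]
  have t1 : Tendsto (fun x => ENNReal.ofReal (Real.exp (-(γ - β) * y)) *
      (hfun F γ (x + y) / hfun F γ x)) atTop (𝓝 (ENNReal.ofReal (Real.exp (-(γ - β) * y)))) := by
    have h1 := ENNReal.Tendsto.const_mul (a := ENNReal.ofReal (Real.exp (-(γ - β) * y)))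
      (hfun_div_tendsto_one hub hF2 y) (Or.inl one_ne_zero)
    simpa using h1
  have tot := ENNReal.Tendsto.mul t1 (Or.inl hc0) t2 (Or.inl one_ne_zero)
  rw [mul_one] at tot
  refine Tendsto.congr (fun x => ?_) tot
  have hP0 : ∀ z, Pfun F γ β z ≠ 0 := fun z => Pfun_ne_zero hub β z
  have hPt : ∀ z, Pfun F γ β z ≠ ⊤ := fun z => Pfun_ne_top β z
  calc ENNReal.ofReal (Real.exp (-(γ - β) * y)) * (hfun F γ (x + y) / hfun F γ x) *
        (Kfun F γ β (x + y) * (Kfun F γ β x)⁻¹)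
      = (Pfun F γ β (x + y) / Pfun F γ β x) * (Kfun F γ β (x + y) / Kfun F γ β x) := by
        rw [div_eq_mul_inv (Kfun F γ β (x + y))]
        congr 1
        rw [Pfun, Pfun, div_mul_div' (by simp [ENNReal.ofReal_eq_zero, not_le, Real.exp_pos])
          ENNReal.ofReal_ne_top, ← ENNReal.ofReal_div_of_pos (Real.exp_pos _), ← Real.exp_sub]
        congr 3
        ring
    _ = (Pfun F γ β (x + y) * Kfun F γ β (x + y)) / (Pfun F γ β x * Kfun F γ β x) :=
        (div_mul_div' (hP0 x) (hPt x)).symm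
    _ = mexp F β (x + y) / mexp F β x := by
        rw [← decompA hub hβ, ← decompA hub hβ]

/-- the integrated tail I(x) = ∫_x^∞ h(t) dt -/
def Ifun (F : MeasureTheory.Measure ℝ) (γ x : ℝ) : ℝ≥0∞ :=
  ∫⁻ t in Set.Ioi x, hfun F γ t ∂volume

lemma meas_hfun : Measurable (hfun F γ) := (meas_exp γ).mul (meas_tail F)

lemma mexp_decomp_zero (hγ : 0 ≤ γ) (x : ℝ) :
    mexp F γ x = hfun F γ x + ENNReal.ofReal γ * Ifun F γ x := by
  rw [mexp, rep F hγ x, Ifun]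
  congr 1
  rw [← lintegral_const_mul' _ _ ENNReal.ofReal_ne_top]
  refine lintegral_congr fun t => ?_
  rw [hfun, ← mul_assoc, ← ENNReal.ofReal_mul hγ]
  rfl

lemma block_lb (hγ : 0 ≤ γ) {a b : ℝ} (hab : a ≤ b) :
    ENNReal.ofReal (Real.exp (γ * a)) * tail F b * ENNReal.ofReal (b - a)
      ≤ ∫⁻ t in Set.Ioc a b, hfun F γ t ∂volume := by
  rw [← volume_Ioc (a := a) (b := b), ← setLIntegral_const]
  refine setLIntegral_mono meas_hfun fun t ht => ?_
  rw [hfun]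
  exact mul_le_mul'
    (ENNReal.ofReal_le_ofReal (Real.exp_le_exp.2 (mul_le_mul_of_nonneg_left ht.1.le hγ)))
    (measure_mono (Set.Ioi_subset_Ioi ht.2))

lemma Ifun_ne_zero (hub : ∀ x : ℝ, tail F x ≠ 0) (hγ : 0 ≤ γ) (x : ℝ) : Ifun F γ x ≠ 0 := by
  intro h
  have h1 : ENNReal.ofReal (Real.exp (γ * x)) * tail F (x + 1) * ENNReal.ofReal ((x + 1) - x) ≤
      Ifun F γ x :=
    le_trans (block_lb hγ (by linarith)) (lintegral_mono_set Set.Ioc_subset_Ioi_self)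
  rw [h, le_zero_iff] at h1
  have h2 : ENNReal.ofReal ((x + 1) - x) ≠ 0 := by
    simp [ENNReal.ofReal_eq_zero]
  rcases mul_eq_zero.1 h1 with h3 | h3
  · rcases mul_eq_zero.1 h3 with h4 | h4
    · exact absurd h4 (by simp [ENNReal.ofReal_eq_zero, not_le, Real.exp_pos])
    · exact hub _ h4
  · exact h2 h3

lemma Ifun_ne_top (hsupp : F (Set.Iio 0) = 0) (hF1 : phi F γ < ⊤) (hγ : 0 < γ) (x : ℝ) :
    Ifun F γ x ≠ ⊤ := by
  intro h
  have h1 : ENNReal.ofReal γ * Ifun F γ x ≤ mexp F γ x := by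
    rw [mexp_decomp_zero hγ.le]
    exact le_add_self
  rw [h, ENNReal.mul_top (by simp [ENNReal.ofReal_eq_zero, not_le, hγ])] at h1
  exact mexp_ne_top hsupp hF1 le_rfl x (top_le_iff.1 h1)

lemma Ifun_big (hub : ∀ x : ℝ, tail F x ≠ 0)
    (hF2 : ∀ y : ℝ, Tendsto (fun x : ℝ => tail F (x + y) / tail F x) atTop
      (𝓝 (ENNReal.ofReal (Real.exp (-γ * y))))) (hγ : 0 ≤ γ)
    {K : ℝ≥0∞} (hK : K ≠ ⊤) : ∀ᶠ x in atTop, K * hfun F γ x ≤ Ifun F γ x := by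
  obtain ⟨n, hn⟩ := ENNReal.exists_nat_gt
    (ENNReal.mul_ne_top (ENNReal.mul_ne_top hK ENNReal.ofReal_ne_top) ENNReal.ofNat_ne_top :
      K * ENNReal.ofReal (Real.exp γ) * 2 ≠ ⊤)
  have hblock : ∀ k : ℕ, ∀ᶠ x in atTop, hfun F γ x / 2 ≤ hfun F γ (x + (k + 1 : ℝ)) := by
    intro k
    have ht := (hfun_div_tendsto_one hub hF2 (k + 1 : ℝ)).eventually_const_lt
      (by norm_num : (2 : ℝ≥0∞)⁻¹ < 1)
    filter_upwards [ht] with x hx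
    have h2 := (ENNReal.le_div_iff_mul_le (Or.inl (hfun_ne_zero hub x))
      (Or.inl (hfun_ne_top x))).1 hx.le
    calc hfun F γ x / 2 = 2⁻¹ * hfun F γ x := by rw [div_eq_mul_inv, mul_comm]
      _ ≤ hfun F γ (x + (k + 1 : ℝ)) := h2
  have hall : ∀ᶠ x in atTop, ∀ k ∈ Finset.range n, hfun F γ x / 2 ≤ hfun F γ (x + (k + 1 : ℝ)) :=
    (eventually_all_finset (Finset.range n)).2 fun k _ => hblock k
  filter_upwards [hall] with x hx
  -- each unit block is at least e^{-γ} * (h x / 2)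
  have hblk : ∀ k ∈ Finset.range n,
      ENNReal.ofReal (Real.exp (-γ)) * (hfun F γ x / 2)
        ≤ ∫⁻ t in Set.Ioc (x + k) (x + k + 1), hfun F γ t ∂volume := by
    intro k hk
    have h1 := block_lb (F := F) hγ (a := x + k) (b := x + k + 1) (by linarith)
    have h2 : ENNReal.ofReal (Real.exp (γ * (x + k))) * tail F (x + k + 1) *
        ENNReal.ofReal ((x + k + 1) - (x + k))
        = ENNReal.ofReal (Real.exp (-γ)) * hfun F γ (x + (k + 1 : ℝ)) := by
      rw [show ((x + k + 1) - (x + k) : ℝ) = 1 by ring, ENNReal.ofReal_one, mul_one,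
        show (x + (k + 1 : ℝ)) = x + k + 1 by ring, hfun, ← mul_assoc,
        ← ENNReal.ofReal_mul (Real.exp_pos _).le, ← Real.exp_add]
      congr 2
      ring
    refine le_trans ?_ h1
    rw [h2]
    exact mul_le_mul_right (hx k hk) _
  -- sum the blocks
  have hsum : ∀ m : ℕ, m ≤ n →
      (m : ℝ≥0∞) * (ENNReal.ofReal (Real.exp (-γ)) * (hfun F γ x / 2))
        ≤ ∫⁻ t in Set.Ioc x (x + m), hfun F γ t ∂volume := by
    intro m
    induction m with
    | zero => simp
    | succ m ih =>
      intro hm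
      have hm' : m ≤ n := by omega
      have hm'' : m ∈ Finset.range n := Finset.mem_range.2 (by omega)
      have hx1 : x ≤ x + (m : ℝ) := by
        have : (0:ℝ) ≤ m := Nat.cast_nonneg m
        linarith
      have hsplit : Set.Ioc x (x + ((m + 1 : ℕ) : ℝ))
          = Set.Ioc x (x + m) ∪ Set.Ioc (x + m) (x + m + 1) := by
        have hcast : x + ((m + 1 : ℕ) : ℝ) = x + m + 1 := by push_cast; ring
        rw [hcast, Set.Ioc_union_Ioc_eq_Ioc hx1 (by linarith)]
      rw [hsplit, lintegral_union measurableSet_Ioc (Set.Ioc_disjoint_Ioc_of_le le_rfl)]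
      have hcast2 : ((m + 1 : ℕ) : ℝ≥0∞) = (m : ℝ≥0∞) + 1 := by push_cast; ring
      rw [hcast2, add_mul, one_mul]
      exact add_le_add (ih hm') (hblk m hm'')
  have e1 : ENNReal.ofReal (Real.exp γ) * ENNReal.ofReal (Real.exp (-γ)) = 1 := by
    rw [← ENNReal.ofReal_mul (Real.exp_pos _).le, ← Real.exp_add]
    simp
  have e2 : (2 : ℝ≥0∞) * 2⁻¹ = 1 := ENNReal.mul_inv_cancel (by norm_num) (by norm_num)
  have key : K * ENNReal.ofReal (Real.exp γ) * 2 *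
      (ENNReal.ofReal (Real.exp (-γ)) * (hfun F γ x / 2)) = K * hfun F γ x := by
    calc K * ENNReal.ofReal (Real.exp γ) * 2 *
          (ENNReal.ofReal (Real.exp (-γ)) * (hfun F γ x / 2))
        = (K * hfun F γ x) *
            ((ENNReal.ofReal (Real.exp γ) * ENNReal.ofReal (Real.exp (-γ))) * (2 * 2⁻¹)) := by
          rw [div_eq_mul_inv]; ring
      _ = K * hfun F γ x := by rw [e1, e2, one_mul, mul_one]
  calc K * hfun F γ x
      = K * ENNReal.ofReal (Real.exp γ) * 2 *
          (ENNReal.ofReal (Real.exp (-γ)) * (hfun F γ x / 2)) := key.symm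
    _ ≤ (n : ℝ≥0∞) * (ENNReal.ofReal (Real.exp (-γ)) * (hfun F γ x / 2)) :=
        mul_le_mul_left hn.le _
    _ ≤ ∫⁻ t in Set.Ioc x (x + n), hfun F γ t ∂volume := hsum n le_rfl
    _ ≤ Ifun F γ x := lintegral_mono_set Set.Ioc_subset_Ioi_self

lemma hfun_small (hub : ∀ x : ℝ, tail F x ≠ 0)
    (hF2 : ∀ y : ℝ, Tendsto (fun x : ℝ => tail F (x + y) / tail F x) atTop
      (𝓝 (ENNReal.ofReal (Real.exp (-γ * y))))) (hγ : 0 ≤ γ)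
    {δ : ℝ≥0∞} (hδ0 : δ ≠ 0) (hδt : δ ≠ ⊤) :
    ∀ᶠ x in atTop, hfun F γ x ≤ δ * Ifun F γ x := by
  filter_upwards [Ifun_big hub hF2 hγ (K := δ⁻¹) (ENNReal.inv_ne_top.2 hδ0)] with x hx
  calc hfun F γ x = δ * (δ⁻¹ * hfun F γ x) := by
        rw [← mul_assoc, ENNReal.mul_inv_cancel hδ0 hδt, one_mul]
    _ ≤ δ * Ifun F γ x := mul_le_mul_right hx _

lemma r1_tendsto (hsupp : F (Set.Iio 0) = 0) (hub : ∀ x : ℝ, tail F x ≠ 0)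
    (hF1 : phi F γ < ⊤)
    (hF2 : ∀ y : ℝ, Tendsto (fun x : ℝ => tail F (x + y) / tail F x) atTop
      (𝓝 (ENNReal.ofReal (Real.exp (-γ * y))))) (hγ : 0 < γ) :
    Tendsto (fun x => mexp F γ x / (ENNReal.ofReal γ * Ifun F γ x)) atTop (𝓝 1) := by
  have hγ0 : ENNReal.ofReal γ ≠ 0 := by simp [ENNReal.ofReal_eq_zero, not_le, hγ]
  have hIγ0 : ∀ x : ℝ, ENNReal.ofReal γ * Ifun F γ x ≠ 0 := fun x =>
    mul_ne_zero hγ0 (Ifun_ne_zero hub hγ.le x)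
  have hIγt : ∀ x : ℝ, ENNReal.ofReal γ * Ifun F γ x ≠ ⊤ := fun x =>
    ENNReal.mul_ne_top ENNReal.ofReal_ne_top (Ifun_ne_top hsupp hF1 hγ x)
  have heq : ∀ x : ℝ, mexp F γ x / (ENNReal.ofReal γ * Ifun F γ x)
      = 1 + hfun F γ x / (ENNReal.ofReal γ * Ifun F γ x) := by
    intro x
    rw [mexp_decomp_zero hγ.le, ENNReal.add_div, ENNReal.div_self (hIγ0 x) (hIγt x), add_comm]
  have hsm : Tendsto (fun x => hfun F γ x / (ENNReal.ofReal γ * Ifun F γ x)) atTop (𝓝 0) := by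
    rw [ENNReal.tendsto_nhds_zero]
    intro ε hε
    rcases eq_or_ne ε ⊤ with rfl | hεt
    · exact Filter.Eventually.of_forall fun x => le_top
    · filter_upwards [hfun_small hub hF2 hγ.le (δ := ε * ENNReal.ofReal γ)
        (mul_ne_zero hε.ne' hγ0) (ENNReal.mul_ne_top hεt ENNReal.ofReal_ne_top)] with x hx
      rw [ENNReal.div_le_iff (hIγ0 x) (hIγt x)]
      calc hfun F γ x ≤ ε * ENNReal.ofReal γ * Ifun F γ x := hx
        _ = ε * (ENNReal.ofReal γ * Ifun F γ x) := by ring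
  have h1 := Tendsto.const_add (1 : ℝ≥0∞) hsm
  rw [add_zero] at h1
  exact Tendsto.congr (fun x => (heq x).symm) h1

lemma Ifun_chunk (hγ : 0 ≤ γ) {y : ℝ} (hy : 0 ≤ y) (x : ℝ) :
    Ifun F γ x ≤ Ifun F γ (x + y) + ENNReal.ofReal (y * Real.exp (γ * y)) * hfun F γ x := by
  have hsplit : Set.Ioi x = Set.Ioc x (x + y) ∪ Set.Ioi (x + y) :=
    (Set.Ioc_union_Ioi_eq_Ioi (by linarith)).symm
  rw [Ifun, hsplit, lintegral_union measurableSet_Ioi (Set.Ioc_disjoint_Ioi le_rfl), add_comm]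
  refine add_le_add le_rfl ?_
  have hb : ∀ t ∈ Set.Ioc x (x + y), hfun F γ t
      ≤ ENNReal.ofReal (Real.exp (γ * y)) * hfun F γ x := by
    intro t ht
    rw [hfun, hfun, ← mul_assoc, ← ENNReal.ofReal_mul (Real.exp_pos _).le, ← Real.exp_add]
    exact mul_le_mul'
      (ENNReal.ofReal_le_ofReal (Real.exp_le_exp.2 (by nlinarith [ht.1.le, ht.2])))
      (measure_mono (Set.Ioi_subset_Ioi ht.1.le))
  calc ∫⁻ t in Set.Ioc x (x + y), hfun F γ t ∂volume
      ≤ ∫⁻ _ in Set.Ioc x (x + y), ENNReal.ofReal (Real.exp (γ * y)) * hfun F γ x ∂volume :=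
        setLIntegral_mono measurable_const hb
    _ = ENNReal.ofReal (Real.exp (γ * y)) * hfun F γ x * volume (Set.Ioc x (x + y)) :=
        setLIntegral_const _ _
    _ = ENNReal.ofReal (y * Real.exp (γ * y)) * hfun F γ x := by
        rw [volume_Ioc, show x + y - x = y by ring, ENNReal.ofReal_mul hy]
        ring

lemma Ifun_ratio (hsupp : F (Set.Iio 0) = 0) (hub : ∀ x : ℝ, tail F x ≠ 0)
    (hF1 : phi F γ < ⊤)
    (hF2 : ∀ y : ℝ, Tendsto (fun x : ℝ => tail F (x + y) / tail F x) atTop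
      (𝓝 (ENNReal.ofReal (Real.exp (-γ * y))))) (hγ : 0 < γ) {y : ℝ} (hy : 0 ≤ y) :
    Tendsto (fun x => Ifun F γ (x + y) / Ifun F γ x) atTop (𝓝 1) := by
  rw [tendsto_div_iff_bounds ENNReal.one_ne_top (fun x => Ifun_ne_zero hub hγ.le x)
    (fun x => Ifun_ne_top hsupp hF1 hγ x)]
  intro ε hε
  set ε' := min ε 1 with hε'def
  have hε'0 : ε' ≠ 0 := (lt_min hε zero_lt_one).ne'
  have hε't : ε' ≠ ⊤ := ((min_le_right ε 1).trans_lt (by norm_num)).ne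
  set c := ENNReal.ofReal (y * Real.exp (γ * y)) with hcdef
  have hc1t : c + 1 ≠ ⊤ := ENNReal.add_ne_top.2 ⟨ENNReal.ofReal_ne_top, ENNReal.one_ne_top⟩
  have hc10 : c + 1 ≠ 0 := fun h => by simp [add_eq_zero] at h
  set δ := ε' * (c + 1)⁻¹ with hδdef
  have hδ0 : δ ≠ 0 := mul_ne_zero hε'0 (ENNReal.inv_ne_zero.2 hc1t)
  have hδt : δ ≠ ⊤ := ENNReal.mul_ne_top hε't (ENNReal.inv_ne_top.2 hc10)
  filter_upwards [hfun_small hub hF2 hγ.le hδ0 hδt] with x hx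
  constructor
  · calc Ifun F γ (x + y) ≤ Ifun F γ x := lintegral_mono_set (Set.Ioi_subset_Ioi (by linarith))
      _ = 1 * Ifun F γ x := (one_mul _).symm
      _ ≤ (1 + ε) * Ifun F γ x := mul_le_mul_left (self_le_add_right 1 ε) _
  · have hcδ : c * δ ≤ ε' := by
      calc c * δ = ε' * (c * (c + 1)⁻¹) := by rw [hδdef]; ring
        _ ≤ ε' * ((c + 1) * (c + 1)⁻¹) :=
            mul_le_mul_right (mul_le_mul_left (self_le_add_right c 1) _) _
        _ = ε' := by rw [ENNReal.mul_inv_cancel hc10 hc1t, mul_one]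
    have hstep : Ifun F γ x ≤ Ifun F γ (x + y) + ε' * Ifun F γ x := by
      calc Ifun F γ x ≤ Ifun F γ (x + y) + c * hfun F γ x := Ifun_chunk hγ.le hy x
        _ ≤ Ifun F γ (x + y) + c * (δ * Ifun F γ x) := add_le_add le_rfl (mul_le_mul_right hx _)
        _ = Ifun F γ (x + y) + (c * δ) * Ifun F γ x := by rw [← mul_assoc]
        _ ≤ Ifun F γ (x + y) + ε' * Ifun F γ x := add_le_add le_rfl (mul_le_mul_left hcδ _)
    calc (1 - ε) * Ifun F γ x ≤ (1 - ε') * Ifun F γ x :=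
          mul_le_mul_left (tsub_le_tsub_left (min_le_left ε 1) 1) _
      _ = 1 * Ifun F γ x - ε' * Ifun F γ x :=
          ENNReal.sub_mul fun _ _ => Ifun_ne_top hsupp hF1 hγ x
      _ ≤ Ifun F γ (x + y) := by
          rw [one_mul]
          exact tsub_le_iff_right.2 hstep

lemma div_chain {A B C D : ℝ≥0∞} (hB0 : B ≠ 0) (hBt : B ≠ ⊤) (hC0 : C ≠ 0) (hCt : C ≠ ⊤)
    (hD0 : D ≠ 0) (hDt : D ≠ ⊤) :
    (A / B) * (B / C) * (D / C)⁻¹ = A / D := by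
  rw [ENNReal.inv_div (Or.inl hCt) (Or.inl hC0), div_eq_mul_inv, div_eq_mul_inv,
    div_eq_mul_inv, div_eq_mul_inv]
  calc A * B⁻¹ * (B * C⁻¹) * (C * D⁻¹)
      = A * D⁻¹ * ((B⁻¹ * B) * (C⁻¹ * C)) := by ring
    _ = A * D⁻¹ := by
        rw [ENNReal.inv_mul_cancel hB0 hBt, ENNReal.inv_mul_cancel hC0 hCt, mul_one, mul_one]

/-- main ratio limit, case β = γ > 0 -/
lemma mexp_ratio_tendsto_eq (hsupp : F (Set.Iio 0) = 0) (hub : ∀ x : ℝ, tail F x ≠ 0)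
    (hF1 : phi F γ < ⊤)
    (hF2 : ∀ y : ℝ, Tendsto (fun x : ℝ => tail F (x + y) / tail F x) atTop
      (𝓝 (ENNReal.ofReal (Real.exp (-γ * y))))) (hγ : 0 < γ) (y : ℝ) :
    Tendsto (fun x => mexp F γ (x + y) / mexp F γ x) atTop (𝓝 1) := by
  have main : ∀ y : ℝ, 0 ≤ y →
      Tendsto (fun x => mexp F γ (x + y) / mexp F γ x) atTop (𝓝 1) := by
    intro y hy
    have hA := r1_tendsto hsupp hub hF1 hF2 hγ
    have hAy : Tendsto (fun x => mexp F γ (x + y) / (ENNReal.ofReal γ * Ifun F γ (x + y)))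
        atTop (𝓝 1) := hA.comp (tendsto_atTop_add_const_right atTop y tendsto_id)
    have hB : Tendsto (fun x => (ENNReal.ofReal γ * Ifun F γ (x + y)) /
        (ENNReal.ofReal γ * Ifun F γ x)) atTop (𝓝 1) := by
      refine Tendsto.congr (fun x => ?_) (Ifun_ratio hsupp hub hF1 hF2 hγ hy)
      rw [ENNReal.mul_div_mul_left _ _ (by simp [ENNReal.ofReal_eq_zero, not_le, hγ])
        ENNReal.ofReal_ne_top]
    have hAinv := ENNReal.tendsto_inv_iff.2 hA
    rw [inv_one] at hAinv
    have tot := ENNReal.Tendsto.mul (ENNReal.Tendsto.mul hAy (Or.inl one_ne_zero) hB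
      (Or.inl one_ne_zero)) (Or.inl (by norm_num)) hAinv (Or.inl one_ne_zero)
    rw [mul_one, mul_one] at tot
    refine Tendsto.congr (fun x => ?_) tot
    exact div_chain (mul_ne_zero (by simp [ENNReal.ofReal_eq_zero, not_le, hγ])
        (Ifun_ne_zero hub hγ.le _))
      (ENNReal.mul_ne_top ENNReal.ofReal_ne_top (Ifun_ne_top hsupp hF1 hγ _))
      (mul_ne_zero (by simp [ENNReal.ofReal_eq_zero, not_le, hγ]) (Ifun_ne_zero hub hγ.le _))
      (ENNReal.mul_ne_top ENNReal.ofReal_ne_top (Ifun_ne_top hsupp hF1 hγ _))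
      (mexp_ne_zero hub hγ.le _) (mexp_ne_top hsupp hF1 le_rfl _)
  rcases le_or_gt 0 y with hy | hy
  · exact main y hy
  · have h1 := (main (-y) (by linarith)).comp
      (tendsto_atTop_add_const_right atTop y tendsto_id)
    have h2 := ENNReal.tendsto_inv_iff.2 h1
    rw [inv_one] at h2
    refine Tendsto.congr (fun x => ?_) h2
    show ((fun z => mexp F γ (z + -y) / mexp F γ z) ((fun x => x + y) x))⁻¹
        = mexp F γ (x + y) / mexp F γ x
    simp only []
    rw [show x + y + -y = x by ring,
      ENNReal.inv_div (Or.inl (mexp_ne_top hsupp hF1 le_rfl _))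
        (Or.inl (mexp_ne_zero hub hγ.le _))]

lemma mconv_prob : MeasureTheory.IsProbabilityMeasure (mconv F F) := by
  have hadd : Measurable fun p : ℝ × ℝ => p.1 + p.2 := measurable_fst.add measurable_snd
  exact Measure.isProbabilityMeasure_map hadd.aemeasurable

lemma meas_mexp {β : ℝ} : Measurable fun z : ℝ => mexp F β z := by
  have h : Antitone fun z : ℝ => mexp F β z := fun a b hab =>
    lintegral_mono_set (Set.Ioi_subset_Ioi hab)
  exact h.measurable

lemma meas_bexp (β : ℝ) : Measurable fun t : ℝ => ENNReal.ofReal (β * Real.exp (β * t)) :=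
  (continuous_const.mul (Real.continuous_exp.comp (continuous_const.mul continuous_id))).measurable.ennreal_ofReal

lemma conv_mexp_eq {β : ℝ} (hβ : 0 ≤ β) (x : ℝ) :
    mexp (mconv F F) β x
      = ∫⁻ u, ENNReal.ofReal (Real.exp (β * u)) * mexp F β (x - u) ∂F := by
  have hadd : Measurable fun p : ℝ × ℝ => p.1 + p.2 := measurable_fst.add measurable_snd
  have hS : MeasurableSet {p : ℝ × ℝ | x < p.1 + p.2} := measurableSet_lt measurable_const hadd
  rw [mexp, mconv, setLIntegral_map measurableSet_Ioi (meas_exp β) hadd]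
  have hpre : (fun p : ℝ × ℝ => p.1 + p.2) ⁻¹' (Set.Ioi x) = {p : ℝ × ℝ | x < p.1 + p.2} := rfl
  rw [hpre, ← lintegral_indicator hS,
    lintegral_prod (fun z : ℝ × ℝ => ({p : ℝ × ℝ | x < p.1 + p.2}).indicator
      (fun p => ENNReal.ofReal (Real.exp (β * (p.1 + p.2)))) z)
      ((Measurable.indicator (by exact (meas_exp β).comp hadd) hS).aemeasurable)]
  refine lintegral_congr fun u => ?_
  have hind : ∀ v : ℝ, ({p : ℝ × ℝ | x < p.1 + p.2}).indicator
      (fun p => ENNReal.ofReal (Real.exp (β * (p.1 + p.2)))) (u, v)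
      = (Set.Ioi (x - u)).indicator (fun v => ENNReal.ofReal (Real.exp (β * (u + v)))) v := by
    intro v
    by_cases hv : x < u + v
    · rw [Set.indicator_of_mem (by exact hv), Set.indicator_of_mem (by simp [Set.mem_Ioi]; linarith)]
    · rw [Set.indicator_of_notMem (by exact hv), Set.indicator_of_notMem (by simp [Set.mem_Ioi]; linarith)]
  rw [lintegral_congr hind, lintegral_indicator measurableSet_Ioi, mexp,
    ← lintegral_const_mul' _ _ ENNReal.ofReal_ne_top]
  refine setLIntegral_congr_fun measurableSet_Ioi (fun v _ => ?_)
  rw [← ENNReal.ofReal_mul (Real.exp_pos _).le, ← Real.exp_add]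
  congr 2
  ring

lemma tilt_sfinite (β : ℝ) : SFinite (tilt F β) := by
  unfold tilt
  infer_instance

lemma tilt_mconv_tail (hsupp : F (Set.Iio 0) = 0) {β : ℝ} (hβ : 0 ≤ β)
    (hphiβt : phi F β ≠ ⊤) (x : ℝ) :
    tail (mconv (tilt F β) (tilt F β)) x
      = (phi F β)⁻¹ * ((phi F β)⁻¹ * mexp (mconv F F) β x) := by
  have hphiβ0 : phi F β ≠ 0 := phi_ne_zero hsupp hβ
  have hct : (phi F β)⁻¹ ≠ ⊤ := ENNReal.inv_ne_top.2 hphiβ0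
  have hadd : Measurable fun p : ℝ × ℝ => p.1 + p.2 := measurable_fst.add measurable_snd
  have hS : MeasurableSet {p : ℝ × ℝ | x < p.1 + p.2} := measurableSet_lt measurable_const hadd
  have hmexp_meas : Measurable fun u : ℝ => mexp F β (x - u) :=
    meas_mexp.comp (measurable_const.sub measurable_id)
  haveI : SFinite (tilt F β) := tilt_sfinite β
  have hsec : ∀ u : ℝ, (Prod.mk u ⁻¹' {p : ℝ × ℝ | x < p.1 + p.2}) = Set.Ioi (x - u) := by
    intro u
    ext v
    simp only [Set.mem_preimage, Set.mem_setOf_eq, Set.mem_Ioi]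
    constructor <;> intro h <;> linarith
  rw [tail, mconv, Measure.map_apply hadd measurableSet_Ioi,
    show (fun p : ℝ × ℝ => p.1 + p.2) ⁻¹' (Set.Ioi x) = {p : ℝ × ℝ | x < p.1 + p.2} from rfl,
    Measure.prod_apply hS]
  calc ∫⁻ u, (tilt F β) (Prod.mk u ⁻¹' {p : ℝ × ℝ | x < p.1 + p.2}) ∂(tilt F β)
      = ∫⁻ u, (phi F β)⁻¹ * mexp F β (x - u) ∂(tilt F β) := by
        refine lintegral_congr fun u => ?_
        rw [hsec u]
        exact tilt_tail β (x - u)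
    _ = (phi F β)⁻¹ * ∫⁻ u, mexp F β (x - u) ∂(tilt F β) := lintegral_const_mul' _ _ hct
    _ = (phi F β)⁻¹ * ((phi F β)⁻¹ *
          ∫⁻ u, ENNReal.ofReal (Real.exp (β * u)) * mexp F β (x - u) ∂F) := by
        rw [tilt, lintegral_smul_measure,
          lintegral_withDensity_eq_lintegral_mul _ (meas_exp β) hmexp_meas]
        rfl
    _ = (phi F β)⁻¹ * ((phi F β)⁻¹ * mexp (mconv F F) β x) := by rw [conv_mexp_eq hβ x]

lemma conv_mexp_ratio (hsupp : F (Set.Iio 0) = 0) (hub : ∀ x : ℝ, tail F x ≠ 0)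
    (hF1 : phi F γ < ⊤)
    (hF3 : Tendsto (fun x : ℝ => tail (mconv F F) x / tail F x) atTop (𝓝 (2 * phi F γ)))
    {β : ℝ} (hβ : 0 ≤ β) (hβγ : β ≤ γ) :
    Tendsto (fun x => mexp (mconv F F) β x / mexp F β x) atTop (𝓝 (2 * phi F γ)) := by
  haveI : MeasureTheory.IsProbabilityMeasure (mconv F F) := mconv_prob
  have hc : 2 * phi F γ ≠ ⊤ := ENNReal.mul_ne_top (by simp) hF1.ne
  rw [tendsto_div_iff_bounds hc (fun x => mexp_ne_zero hub hβ x)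
    (fun x => mexp_ne_top hsupp hF1 hβγ x)]
  intro ε hε
  rcases eq_or_ne ε ⊤ with rfl | hεt
  · refine Filter.Eventually.of_forall fun x => ⟨?_, ?_⟩
    · rw [add_top, ENNReal.top_mul (mexp_ne_zero hub hβ x)]
      exact le_top
    · rw [tsub_eq_zero_of_le le_top, zero_mul]
      exact zero_le
  · have hbd := (tendsto_div_iff_bounds hc hub (tail_ne_top F)).1 hF3 ε hε
    obtain ⟨x₀, hx₀⟩ := eventually_atTop.1 hbd
    filter_upwards [eventually_ge_atTop x₀] with x hx
    have hcε : 2 * phi F γ + ε ≠ ⊤ := ENNReal.add_ne_top.2 ⟨hc, hεt⟩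
    have hcε' : 2 * phi F γ - ε ≠ ⊤ := ne_top_of_le_ne_top hc tsub_le_self
    have hup : ∀ t, x ≤ t →
        (mconv F F) (Set.Ioi t) ≤ (2 * phi F γ + ε) * F (Set.Ioi t) :=
      fun t ht => (hx₀ t (le_trans hx ht)).1
    have hlo : ∀ t, x ≤ t →
        (2 * phi F γ - ε) * F (Set.Ioi t) ≤ (mconv F F) (Set.Ioi t) :=
      fun t ht => (hx₀ t (le_trans hx ht)).2
    constructor
    · rw [mexp, mexp, rep (mconv F F) hβ x, rep F hβ x, mul_add]
      refine add_le_add ?_ ?_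
      · calc ENNReal.ofReal (Real.exp (β * x)) * (mconv F F) (Set.Ioi x)
            ≤ ENNReal.ofReal (Real.exp (β * x)) * ((2 * phi F γ + ε) * F (Set.Ioi x)) :=
              mul_le_mul_right (hup x le_rfl) _
          _ = (2 * phi F γ + ε) * (ENNReal.ofReal (Real.exp (β * x)) * F (Set.Ioi x)) := by
              ring
      · rw [← lintegral_const_mul' (2 * phi F γ + ε) _ hcε]
        refine setLIntegral_mono (measurable_const.mul ((meas_bexp β).mul (meas_tail F)))
          fun t ht => ?_
        calc ENNReal.ofReal (β * Real.exp (β * t)) * (mconv F F) (Set.Ioi t)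
            ≤ ENNReal.ofReal (β * Real.exp (β * t)) * ((2 * phi F γ + ε) * F (Set.Ioi t)) :=
              mul_le_mul_right (hup t (Set.mem_Ioi.1 ht).le) _
          _ = (2 * phi F γ + ε) * (ENNReal.ofReal (β * Real.exp (β * t)) * F (Set.Ioi t)) := by
              ring
    · rw [mexp, mexp, rep (mconv F F) hβ x, rep F hβ x, mul_add]
      refine add_le_add ?_ ?_
      · calc (2 * phi F γ - ε) * (ENNReal.ofReal (Real.exp (β * x)) * F (Set.Ioi x))
            = ENNReal.ofReal (Real.exp (β * x)) * ((2 * phi F γ - ε) * F (Set.Ioi x)) := by ring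
          _ ≤ ENNReal.ofReal (Real.exp (β * x)) * (mconv F F) (Set.Ioi x) :=
              mul_le_mul_right (hlo x le_rfl) _
      · rw [← lintegral_const_mul' (2 * phi F γ - ε) _ hcε']
        refine setLIntegral_mono ((meas_bexp β).mul (meas_tail (mconv F F)))
          fun t ht => ?_
        calc (2 * phi F γ - ε) * (ENNReal.ofReal (β * Real.exp (β * t)) * F (Set.Ioi t))
            = ENNReal.ofReal (β * Real.exp (β * t)) * ((2 * phi F γ - ε) * F (Set.Ioi t)) := by
              ring
          _ ≤ ENNReal.ofReal (β * Real.exp (β * t)) * (mconv F F) (Set.Ioi t) :=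
              mul_le_mul_right (hlo t (Set.mem_Ioi.1 ht).le) _



end Stmt13Aux

open Stmt13Aux in
/-- Theorem 6: if F ∈ S(γ̂), then the β-tilt of F is in S(γ̂−β) for all
β ∈ [0,γ̂]; in particular the γ̂-tilt is subexponential (class S(0)). -/
theorem stmt13 (F : MeasureTheory.Measure ℝ) [MeasureTheory.IsProbabilityMeasure F]
    (hsupp : F (Set.Iio 0) = 0) (hub : ∀ x : ℝ, tail F x ≠ 0)
    (γhat : ℝ) (hγ0 : 0 ≤ γhat) (hγhat : ENNReal.ofReal γhat = gammaHat F)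
    (hF : memS F γhat) :
    (∀ β : ℝ, 0 ≤ β → β ≤ γhat → memS (tilt F β) (γhat - β)) ∧
      memS (tilt F γhat) 0 := by
  obtain ⟨hF1, hF2, hF3⟩ := hF
  have main : ∀ β : ℝ, 0 ≤ β → β ≤ γhat → memS (tilt F β) (γhat - β) := by
    intro β hβ0 hβγ
    rcases eq_or_lt_of_le hβ0 with hβz | hβpos
    · rw [← hβz, tilt_zero, sub_zero]
      exact ⟨hF1, hF2, hF3⟩
    · have hphiβt : phi F β ≠ ⊤ := ((phi_mono hsupp hβγ).trans_lt hF1).ne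
      have hphiβ0 : phi F β ≠ 0 := phi_ne_zero hsupp hβ0
      have hinv0 : (phi F β)⁻¹ ≠ 0 := ENNReal.inv_ne_zero.2 hphiβt
      have hinvt : (phi F β)⁻¹ ≠ ⊤ := ENNReal.inv_ne_top.2 hphiβ0
      refine ⟨?_, ?_, ?_⟩
      · rw [tilt_phi, show β + (γhat - β) = γhat from by ring, lt_top_iff_ne_top]
        exact ENNReal.mul_ne_top hinvt hF1.ne
      · intro y
        have heq : ∀ x : ℝ, tail (tilt F β) (x + y) / tail (tilt F β) x
            = mexp F β (x + y) / mexp F β x := by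
          intro x
          rw [tilt_tail, tilt_tail, ENNReal.mul_div_mul_left _ _ hinv0 hinvt]
        rcases lt_or_eq_of_le hβγ with hlt | heqβ
        · exact Tendsto.congr (fun x => (heq x).symm)
            (mexp_ratio_tendsto_pos hsupp hub hF1 hF2 hβ0 hlt y)
        · subst heqβ
          have h1 := mexp_ratio_tendsto_eq hsupp hub hF1 hF2 hβpos y
          rw [show (-(β - β) * y) = 0 from by ring, Real.exp_zero, ENNReal.ofReal_one]
          exact Tendsto.congr (fun x => (heq x).symm) h1
      · have hmr := conv_mexp_ratio hsupp hub hF1 hF3 hβ0 hβγ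
        have heq : ∀ x : ℝ, tail (mconv (tilt F β) (tilt F β)) x / tail (tilt F β) x
            = (phi F β)⁻¹ * (mexp (mconv F F) β x / mexp F β x) := by
          intro x
          rw [tilt_mconv_tail hsupp hβ0 hphiβt, tilt_tail,
            ENNReal.mul_div_mul_left _ _ hinv0 hinvt, div_eq_mul_inv, div_eq_mul_inv, mul_assoc]
        have hlim := ENNReal.Tendsto.const_mul (a := (phi F β)⁻¹) hmr (Or.inr hinvt)
        have hval : (phi F β)⁻¹ * (2 * phi F γhat) = 2 * phi (tilt F β) (γhat - β) := by
          rw [tilt_phi, show β + (γhat - β) = γhat from by ring]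
          ring
        rw [hval] at hlim
        exact Tendsto.congr (fun x => (heq x).symm) hlim
  refine ⟨main, ?_⟩
  have h := main γhat hγ0 le_rfl
  rwa [sub_self] at h
end
end

section
/- Let F_1 and F_2 be distributions on [0,∞) with F_1 heavy-tailed. Then liminf_{x→∞} (F_1*F_2)‾(x) / (F̄_1(x) + F̄_2(x)) = 1. -/
open MeasureTheory Filter Real Set
open scoped ENNReal Topology

noncomputable section

section auxiliary

lemma tail_meas (μ : MeasureTheory.Measure ℝ) : Measurable (tail μ) := by
  have h : Antitone (tail μ) := fun a b hab => measure_mono (Ioi_subset_Ioi hab)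
  exact h.measurable

lemma tail_le_one (μ : MeasureTheory.Measure ℝ) [IsProbabilityMeasure μ] (x : ℝ) :
    tail μ x ≤ 1 := prob_le_one

lemma exp_lint {γ : ℝ} (hγ : 0 < γ) {a b : ℝ} (hab : a ≤ b) :
    ∫⁻ t in Ico a b, ENNReal.ofReal (γ * Real.exp (γ * t))
      = ENNReal.ofReal (Real.exp (γ * b) - Real.exp (γ * a)) := by
  have hcont : Continuous fun t : ℝ => γ * Real.exp (γ * t) := by continuity
  have hint : IntegrableOn (fun t : ℝ => γ * Real.exp (γ * t)) (Ico a b) volume :=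
    (hcont.integrableOn_Icc (a := a) (b := b)).mono_set Ico_subset_Icc_self
  rw [← MeasureTheory.ofReal_integral_eq_lintegral_ofReal hint]
  · congr 1
    rw [MeasureTheory.integral_Ico_eq_integral_Ioo, ← MeasureTheory.integral_Ioc_eq_integral_Ioo,
      ← intervalIntegral.integral_of_le hab]
    have : ∀ x ∈ uIcc a b, HasDerivAt (fun t => Real.exp (γ * t)) (γ * Real.exp (γ * x)) x := by
      intro x _
      have h1 : HasDerivAt (fun t : ℝ => γ * t) γ x := by
        simpa using (hasDerivAt_id x).const_mul γ
      exact ((Real.hasDerivAt_exp (γ * x)).comp x h1).congr_deriv (mul_comm _ _)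
    rw [intervalIntegral.integral_eq_sub_of_hasDerivAt this (hcont.intervalIntegrable a b)]
  · filter_upwards with t
    positivity

lemma w_meas {γ : ℝ} : Measurable (fun t : ℝ => ENNReal.ofReal (γ * Real.exp (γ * t))) := by
  have : Continuous fun t : ℝ => γ * Real.exp (γ * t) := by continuity
  exact this.measurable.ennreal_ofReal

/-- the layer-cake identity for the capped exponential moment -/
lemma layer (μ : MeasureTheory.Measure ℝ) [IsProbabilityMeasure μ] (hs : μ (Set.Iio 0) = 0)
    {γ R : ℝ} (hγ : 0 < γ) (hR : 0 ≤ R) :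
    ∫⁻ x, ENNReal.ofReal (Real.exp (γ * min x R)) ∂μ
      = 1 + ∫⁻ t in Ico 0 R, ENNReal.ofReal (γ * Real.exp (γ * t)) * tail μ t := by
  set w : ℝ → ℝ≥0∞ := fun t => ENNReal.ofReal (γ * Real.exp (γ * t)) with hw
  have hae : ∀ᵐ x ∂μ, 0 ≤ x := by
    rw [ae_iff]
    convert hs using 2
    ext x; simp
  -- step 1: rewrite the inner tail as an integral over μ
  have h1 : ∀ t : ℝ, w t * tail μ t = ∫⁻ x, (Set.Ioi t).indicator (fun _ => w t) x ∂μ := by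
    intro t
    rw [MeasureTheory.lintegral_indicator_const measurableSet_Ioi]
    rfl
  have h2 : ∫⁻ t in Ico 0 R, w t * tail μ t
      = ∫⁻ t in Ico 0 R, ∫⁻ x, (Set.Ioi t).indicator (fun _ => w t) x ∂μ := by
    exact lintegral_congr fun t => h1 t
  -- step 2 : swap
  have hFmeas : Measurable (Function.uncurry
      (fun t x => (Set.Ioi t).indicator (fun _ : ℝ => w t) x)) := by
    have : (Function.uncurry (fun t x => (Set.Ioi t).indicator (fun _ : ℝ => w t) x))
        = Set.indicator {q : ℝ × ℝ | q.1 < q.2} (fun q => w q.1) := by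
      ext p
      by_cases h : p.1 < p.2 <;>
        simp [Function.uncurry, Set.indicator_apply, Set.mem_Ioi, h]
    rw [this]
    exact (w_meas.comp measurable_fst).indicator (measurableSet_lt measurable_fst measurable_snd)
  have h3 : ∫⁻ t in Ico 0 R, ∫⁻ x, (Set.Ioi t).indicator (fun _ => w t) x ∂μ
      = ∫⁻ x, (∫⁻ t in Ico 0 R, (Set.Ioi t).indicator (fun _ => w t) x) ∂μ := by
    exact MeasureTheory.lintegral_lintegral_swap (μ := volume.restrict (Ico 0 R)) (ν := μ)
      hFmeas.aemeasurable
  -- step 3 : compute inner integral for x ≥ 0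
  have h4 : ∀ x : ℝ, 0 ≤ x → (∫⁻ t in Ico 0 R, (Set.Ioi t).indicator (fun _ => w t) x)
      = ENNReal.ofReal (Real.exp (γ * min x R) - 1) := by
    intro x hx
    have e1 : (fun t => (Set.Ioi t).indicator (fun _ : ℝ => w t) x)
        = (Set.Iio x).indicator w := by
      ext t
      by_cases h : t < x <;> simp [Set.indicator_apply, Set.mem_Ioi, Set.mem_Iio, h]
    rw [e1, MeasureTheory.lintegral_indicator measurableSet_Iio,
      MeasureTheory.Measure.restrict_restrict measurableSet_Iio]
    have e2 : Set.Iio x ∩ Ico 0 R = Ico 0 (min x R) := by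
      ext t
      simp only [Set.mem_inter_iff, Set.mem_Iio, Set.mem_Ico, lt_min_iff]
      tauto
    rw [e2, hw]
    rw [exp_lint hγ (le_min hx hR)]
    simp
  have h4' : ∫⁻ x, (∫⁻ t in Ico 0 R, (Set.Ioi t).indicator (fun _ => w t) x) ∂μ
      = ∫⁻ x, ENNReal.ofReal (Real.exp (γ * min x R) - 1) ∂μ := by
    refine lintegral_congr_ae ?_
    filter_upwards [hae] with x hx
    exact h4 x hx
  -- step 4 : combine
  have h5 : ∫⁻ x, ENNReal.ofReal (Real.exp (γ * min x R)) ∂μ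
      = ∫⁻ x, (ENNReal.ofReal (Real.exp (γ * min x R) - 1) + 1) ∂μ := by
    refine lintegral_congr_ae ?_
    filter_upwards [hae] with x hx
    have hge : (1:ℝ) ≤ Real.exp (γ * min x R) := by
      rw [← Real.exp_zero]
      exact Real.exp_le_exp.mpr (by positivity)
    rw [← ENNReal.ofReal_one, ← ENNReal.ofReal_add (by linarith) (by norm_num)]
    norm_num
  rw [h5, lintegral_add_right _ measurable_const, lintegral_const,
    measure_univ, mul_one, h2, h3, h4']
  ring

lemma madd : Measurable (fun p : ℝ × ℝ => p.1 + p.2) := measurable_fst.add measurable_snd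

lemma mconv_prob (F1 F2 : Measure ℝ) [IsProbabilityMeasure F1] [IsProbabilityMeasure F2] :
    IsProbabilityMeasure (mconv F1 F2) :=
  MeasureTheory.Measure.isProbabilityMeasure_map madd.aemeasurable

lemma prod_bad (F1 F2 : Measure ℝ) [IsProbabilityMeasure F1] [IsProbabilityMeasure F2]
    (hs1 : F1 (Set.Iio 0) = 0) (hs2 : F2 (Set.Iio 0) = 0) :
    (F1.prod F2) ((Set.Iio 0 ×ˢ (univ : Set ℝ)) ∪ ((univ : Set ℝ) ×ˢ Set.Iio 0)) = 0 := by
  refine measure_union_null ?_ ?_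
  · rw [MeasureTheory.Measure.prod_prod, hs1, zero_mul]
  · rw [MeasureTheory.Measure.prod_prod, hs2, mul_zero]

lemma prod_ae_nonneg (F1 F2 : Measure ℝ) [IsProbabilityMeasure F1] [IsProbabilityMeasure F2]
    (hs1 : F1 (Set.Iio 0) = 0) (hs2 : F2 (Set.Iio 0) = 0) :
    ∀ᵐ p : ℝ × ℝ ∂(F1.prod F2), 0 ≤ p.1 ∧ 0 ≤ p.2 := by
  rw [ae_iff]
  refine measure_mono_null ?_ (prod_bad F1 F2 hs1 hs2)
  intro p hp
  simp only [Set.mem_setOf_eq, not_and_or, not_le] at hp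
  rcases hp with h | h
  · exact Or.inl (by simp [h])
  · exact Or.inr (by simp [h])

lemma mconv_supp (F1 F2 : Measure ℝ) [IsProbabilityMeasure F1] [IsProbabilityMeasure F2]
    (hs1 : F1 (Set.Iio 0) = 0) (hs2 : F2 (Set.Iio 0) = 0) :
    (mconv F1 F2) (Set.Iio 0) = 0 := by
  rw [mconv, MeasureTheory.Measure.map_apply madd measurableSet_Iio]
  refine measure_mono_null ?_ (prod_bad F1 F2 hs1 hs2)
  intro p hp
  simp only [Set.mem_preimage, Set.mem_Iio] at hp
  by_contra hc
  simp only [Set.mem_union, Set.mem_prod, Set.mem_Iio, Set.mem_univ, and_true, true_and,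
    not_or, not_lt] at hc
  linarith [hc.1, hc.2]

lemma min_add_le {u v R : ℝ} (hu : 0 ≤ u) (hv : 0 ≤ v) (hR : 0 ≤ R) :
    min (u + v) R ≤ min u R + min v R := by
  rcases min_cases u R with ⟨e1, _⟩ | ⟨e1, h1⟩ <;>
    rcases min_cases v R with ⟨e2, _⟩ | ⟨e2, h2⟩ <;>
      rw [e1, e2] <;>
        [skip; skip; skip; skip] <;>
          first
            | exact le_trans (min_le_left _ _) (by linarith)
            | exact le_trans (min_le_right _ _) (by linarith)

lemma submult (F1 F2 : Measure ℝ) [IsProbabilityMeasure F1] [IsProbabilityMeasure F2]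
    (hs1 : F1 (Set.Iio 0) = 0) (hs2 : F2 (Set.Iio 0) = 0)
    {γ R : ℝ} (hγ : 0 < γ) (hR : 0 ≤ R) :
    ∫⁻ x, ENNReal.ofReal (Real.exp (γ * min x R)) ∂(mconv F1 F2)
      ≤ (∫⁻ x, ENNReal.ofReal (Real.exp (γ * min x R)) ∂F1)
        * (∫⁻ x, ENNReal.ofReal (Real.exp (γ * min x R)) ∂F2) := by
  have hme : Measurable (fun x : ℝ => ENNReal.ofReal (Real.exp (γ * min x R))) := by
    have : Continuous fun x : ℝ => Real.exp (γ * min x R) := by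
      exact Real.continuous_exp.comp (continuous_const.mul (continuous_id.min continuous_const))
    exact this.measurable.ennreal_ofReal
  rw [mconv, MeasureTheory.lintegral_map hme madd]
  rw [← MeasureTheory.lintegral_prod_mul (μ := F1) (ν := F2) hme.aemeasurable hme.aemeasurable]
  refine lintegral_mono_ae ?_
  filter_upwards [prod_ae_nonneg F1 F2 hs1 hs2] with p hp
  have key : Real.exp (γ * min (p.1 + p.2) R)
      ≤ Real.exp (γ * min p.1 R) * Real.exp (γ * min p.2 R) := by
    rw [← Real.exp_add]
    refine Real.exp_le_exp.mpr ?_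
    rw [← mul_add]
    exact mul_le_mul_of_nonneg_left (min_add_le hp.1 hp.2 hR) hγ.le
  calc ENNReal.ofReal (Real.exp (γ * min (p.1 + p.2) R))
      ≤ ENNReal.ofReal (Real.exp (γ * min p.1 R) * Real.exp (γ * min p.2 R)) :=
        ENNReal.ofReal_le_ofReal key
    _ = _ := ENNReal.ofReal_mul (Real.exp_nonneg _)

lemma heavy_sup (F1 : Measure ℝ) {γ : ℝ} (hγ : 0 < γ)
    (hheavy : (∫⁻ x, ENNReal.ofReal (Real.exp (γ * x)) ∂F1) = ⊤) :
    ⨆ n : ℕ, ∫⁻ x, ENNReal.ofReal (Real.exp (γ * min x (n : ℝ))) ∂F1 = ⊤ := by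
  have hme : ∀ n : ℕ, Measurable (fun x : ℝ => ENNReal.ofReal (Real.exp (γ * min x (n:ℝ)))) := by
    intro n
    have : Continuous fun x : ℝ => Real.exp (γ * min x (n:ℝ)) :=
      Real.continuous_exp.comp (continuous_const.mul (continuous_id.min continuous_const))
    exact this.measurable.ennreal_ofReal
  have hmono : Monotone (fun (n : ℕ) (x : ℝ) => ENNReal.ofReal (Real.exp (γ * min x (n:ℝ)))) := by
    intro n m hnm
    intro x
    refine ENNReal.ofReal_le_ofReal (Real.exp_le_exp.mpr ?_)
    have : (n : ℝ) ≤ (m : ℝ) := by exact_mod_cast hnm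
    exact mul_le_mul_of_nonneg_left (min_le_min le_rfl this) hγ.le
  rw [← MeasureTheory.lintegral_iSup hme hmono]
  rw [← hheavy]
  refine lintegral_congr fun x => ?_
  refine le_antisymm (iSup_le fun n => ?_) ?_
  · exact ENNReal.ofReal_le_ofReal (Real.exp_le_exp.mpr
      (mul_le_mul_of_nonneg_left (min_le_left _ _) hγ.le))
  · refine le_iSup_of_le ⌈x⌉₊ ?_
    rw [min_eq_left (Nat.le_ceil x)]

lemma tail_tendsto (μ : Measure ℝ) [IsFiniteMeasure μ] : Tendsto (tail μ) atTop (𝓝 0) := by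
  have h := MeasureTheory.tendsto_measure_iInter_atTop (μ := μ) (s := fun x : ℝ => Set.Ioi x)
    (fun i => (measurableSet_Ioi).nullMeasurableSet)
    (fun a b hab => Ioi_subset_Ioi hab) ⟨0, measure_ne_top μ _⟩
  have he : ⋂ n : ℝ, Set.Ioi n = (∅ : Set ℝ) := by
    ext y
    simp only [Set.mem_iInter, Set.mem_Ioi, Set.mem_empty_iff_false, iff_false, not_forall, not_lt]
    exact ⟨y, le_rfl⟩
  rw [he, measure_empty] at h
  exact h

lemma tail_lower (F1 F2 : Measure ℝ) [IsProbabilityMeasure F1] [IsProbabilityMeasure F2]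
    (hs1 : F1 (Set.Iio 0) = 0) (hs2 : F2 (Set.Iio 0) = 0) {x : ℝ} (hx : 0 ≤ x) :
    tail F1 x + tail F2 x ≤ tail (mconv F1 F2) x + tail F1 x * tail F2 x := by
  have hIci1 : F1 (Set.Ici 0) = 1 := by
    have := measure_add_measure_compl (μ := F1) (measurableSet_Ici (a := (0:ℝ)))
    rw [compl_Ici] at this
    rw [hs1, add_zero] at this
    simpa using this
  have hIci2 : F2 (Set.Ici 0) = 1 := by
    have := measure_add_measure_compl (μ := F2) (measurableSet_Ici (a := (0:ℝ)))
    rw [compl_Ici] at this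
    rw [hs2, add_zero] at this
    simpa using this
  set A : Set (ℝ × ℝ) := Set.Ioi x ×ˢ Set.Ici 0
  set B : Set (ℝ × ℝ) := Set.Ici 0 ×ˢ Set.Ioi x
  have hsub : A ∪ B ⊆ (fun p : ℝ × ℝ => p.1 + p.2) ⁻¹' Set.Ioi x := by
    rintro ⟨u, v⟩ h
    rcases h with h | h
    · simp only [A, Set.mem_prod, Set.mem_Ioi, Set.mem_Ici] at h
      simp only [Set.mem_preimage, Set.mem_Ioi]
      linarith [h.1, h.2]
    · simp only [B, Set.mem_prod, Set.mem_Ioi, Set.mem_Ici] at h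
      simp only [Set.mem_preimage, Set.mem_Ioi]
      linarith [h.1, h.2]
  have hAB : (F1.prod F2) (A ∪ B) + (F1.prod F2) (A ∩ B) = (F1.prod F2) A + (F1.prod F2) B :=
    measure_union_add_inter A (measurableSet_Ici.prod measurableSet_Ioi)
  have hA : (F1.prod F2) A = tail F1 x := by
    rw [MeasureTheory.Measure.prod_prod, hIci2, mul_one]; rfl
  have hB : (F1.prod F2) B = tail F2 x := by
    rw [MeasureTheory.Measure.prod_prod, hIci1, one_mul]; rfl
  have hI : (F1.prod F2) (A ∩ B) = tail F1 x * tail F2 x := by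
    have : A ∩ B = Set.Ioi x ×ˢ Set.Ioi x := by
      rw [Set.prod_inter_prod]
      congr 1
      · exact Set.inter_eq_left.mpr (fun y hy => le_trans hx (le_of_lt hy))
      · exact Set.inter_eq_right.mpr (fun y hy => le_trans hx (le_of_lt hy))
    rw [this, MeasureTheory.Measure.prod_prod]; rfl
  have hG : (F1.prod F2) (A ∪ B) ≤ tail (mconv F1 F2) x := by
    rw [tail, mconv, MeasureTheory.Measure.map_apply madd measurableSet_Ioi]
    exact measure_mono hsub
  calc tail F1 x + tail F2 x = (F1.prod F2) A + (F1.prod F2) B := by rw [hA, hB]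
    _ = (F1.prod F2) (A ∪ B) + (F1.prod F2) (A ∩ B) := hAB.symm
    _ ≤ tail (mconv F1 F2) x + tail F1 x * tail F2 x := by
        rw [hI]; exact add_le_add_left hG _

end auxiliary

/-- Theorem 9: if F₁ is heavy-tailed, then
liminf (F₁*F₂)‾(x)/(F̄₁(x)+F̄₂(x)) = 1. -/
theorem stmt16 (F1 F2 : MeasureTheory.Measure ℝ)
    [MeasureTheory.IsProbabilityMeasure F1] [MeasureTheory.IsProbabilityMeasure F2]
    (hsupp1 : F1 (Set.Iio 0) = 0) (hsupp2 : F2 (Set.Iio 0) = 0)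
    (hub1 : ∀ x : ℝ, tail F1 x ≠ 0)
    (hheavy : IsHeavyTailed F1) :
    liminf (fun x : ℝ => tail (mconv F1 F2) x / (tail F1 x + tail F2 x)) atTop = 1 := by
  classical
  haveI hGprob : IsProbabilityMeasure (mconv F1 F2) := mconv_prob F1 F2
  have hGsupp : (mconv F1 F2) (Set.Iio 0) = 0 := mconv_supp F1 F2 hsupp1 hsupp2
  have hTne0 : ∀ x : ℝ, tail F1 x + tail F2 x ≠ 0 := by
    intro x h
    exact hub1 x (by simpa using (add_eq_zero.mp h).1)
  have hTnetop : ∀ x : ℝ, tail F1 x + tail F2 x ≠ ⊤ := by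
    intro x
    have : tail F1 x + tail F2 x ≤ 2 := by
      calc tail F1 x + tail F2 x ≤ 1 + 1 := add_le_add (tail_le_one F1 x) (tail_le_one F2 x)
        _ = 2 := by norm_num
    exact (lt_of_le_of_lt this (by norm_num)).ne
  refine le_antisymm ?hle ?hge
  case hge =>
    -- liminf ≥ 1
    have key : ∀ δ : ℝ, 0 < δ → δ < 1 →
        ENNReal.ofReal (1 - δ) ≤
          liminf (fun x : ℝ => tail (mconv F1 F2) x / (tail F1 x + tail F2 x)) atTop := by
      intro δ hδ0 hδ1
      refine Filter.le_liminf_of_le (by isBoundedDefault) ?_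
      have hev1 : ∀ᶠ x : ℝ in atTop, tail F1 x < ENNReal.ofReal δ := by
        refine (tail_tendsto F1).eventually_lt_const ?_
        simpa using ENNReal.ofReal_pos.mpr hδ0
      filter_upwards [hev1, eventually_ge_atTop (0:ℝ)] with x hx1 hx2
      have h8 := tail_lower F1 F2 hsupp1 hsupp2 hx2
      have hmul : tail F1 x * tail F2 x ≤ ENNReal.ofReal δ * (tail F1 x + tail F2 x) :=
        mul_le_mul' hx1.le le_add_self
      have h9 : tail F1 x + tail F2 x
          ≤ tail (mconv F1 F2) x + ENNReal.ofReal δ * (tail F1 x + tail F2 x) :=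
        le_trans h8 (add_le_add_right hmul _)
      have h10 : ENNReal.ofReal (1 - δ) * (tail F1 x + tail F2 x)
          + ENNReal.ofReal δ * (tail F1 x + tail F2 x)
          = tail F1 x + tail F2 x := by
        rw [← add_mul, ← ENNReal.ofReal_add (by linarith) hδ0.le]
        norm_num
      have h11 : ENNReal.ofReal (1 - δ) * (tail F1 x + tail F2 x)
          + ENNReal.ofReal δ * (tail F1 x + tail F2 x)
          ≤ tail (mconv F1 F2) x + ENNReal.ofReal δ * (tail F1 x + tail F2 x) := by
        rw [h10]; exact h9
      have h12 : ENNReal.ofReal (1 - δ) * (tail F1 x + tail F2 x) ≤ tail (mconv F1 F2) x := by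
        refine (ENNReal.add_le_add_iff_right ?_).mp h11
        exact ENNReal.mul_ne_top ENNReal.ofReal_ne_top (hTnetop x)
      exact (ENNReal.le_div_iff_mul_le (Or.inl (hTne0 x)) (Or.inl (hTnetop x))).mpr h12
    by_contra hlt
    push_neg at hlt
    obtain ⟨r, _, hr1, hr2⟩ := (ENNReal.lt_iff_exists_real_btwn).mp hlt
    have hrpos : 0 < r := by
      by_contra hneg
      push_neg at hneg
      rw [ENNReal.ofReal_eq_zero.mpr hneg] at hr1
      simp at hr1
    have hrlt1 : r < 1 := by
      have := hr2
      rwa [← ENNReal.ofReal_one, ENNReal.ofReal_lt_ofReal_iff (by norm_num)] at this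
    have := key (1 - r) (by linarith) (by linarith)
    rw [show (1 : ℝ) - (1 - r) = r by ring] at this
    exact absurd (lt_of_lt_of_le hr1 this) (lt_irrefl _)
  case hle =>
    by_contra hlt
    push_neg at hlt
    obtain ⟨c, hc1, hc2⟩ := exists_between (lt_min hlt (by norm_num : (1:ℝ≥0∞) < 2))
    have hcL : c < liminf (fun x : ℝ => tail (mconv F1 F2) x / (tail F1 x + tail F2 x)) atTop :=
      lt_of_lt_of_le hc2 (min_le_left _ _)
    have hc32 : c < 2 := lt_of_lt_of_le hc2 (min_le_right _ _)
    have hcne : c ≠ ⊤ := ne_top_of_lt hc32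
    have hev := Filter.eventually_lt_of_lt_liminf hcL
    rw [Filter.eventually_atTop] at hev
    obtain ⟨x1, hx1⟩ := hev
    set x0 : ℝ := max x1 1 with hx0def
    have hx0ge1 : (1:ℝ) ≤ x0 := le_max_right _ _
    have hx0pos : (0:ℝ) < x0 := lt_of_lt_of_le one_pos hx0ge1
    have hhyp : ∀ t : ℝ, x0 ≤ t →
        c * (tail F1 t + tail F2 t) ≤ tail (mconv F1 F2) t := by
      intro t ht
      have h := hx1 t (le_trans (le_max_left _ _) ht)
      exact (ENNReal.le_div_iff_mul_le (Or.inl (hTne0 t)) (Or.inl (hTnetop t))).mp h.le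
    set ε : ℝ := (c - 1).toReal with hεdef
    have hsub1ne : c - 1 ≠ ⊤ := ENNReal.sub_ne_top hcne
    have hεpos : 0 < ε := ENNReal.toReal_pos (tsub_pos_of_lt hc1).ne' hsub1ne
    have hofε : ENNReal.ofReal ε = c - 1 := ENNReal.ofReal_toReal hsub1ne
    have hc1' : c = 1 + ENNReal.ofReal ε := by
      rw [hofε]
      exact (add_tsub_cancel_of_le hc1.le).symm
    have hεle : ε ≤ 1 := by
      have hle' : c - 1 ≤ 1 := by
        refine tsub_le_iff_right.mpr ?_
        calc c ≤ 2 := hc32.le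
          _ = 1 + 1 := by norm_num
      calc ε = (c-1).toReal := rfl
        _ ≤ (1:ℝ≥0∞).toReal := ENNReal.toReal_mono (by norm_num) hle'
        _ = 1 := by norm_num
    -- choose γ
    set γ : ℝ := Real.log (1 + ε^2/128) / x0 with hγdef
    have hγpos : 0 < γ := div_pos (Real.log_pos (by nlinarith)) hx0pos
    have hexpx0 : Real.exp (γ * x0) = 1 + ε^2/128 := by
      rw [hγdef, div_mul_cancel₀ _ (ne_of_gt hx0pos), Real.exp_log (by positivity)]
    set w : ℝ → ℝ≥0∞ := fun t => ENNReal.ofReal (γ * Real.exp (γ * t)) with hwdef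
    have hwm : Measurable w := w_meas
    set A : ℝ → ℝ≥0∞ := fun R => ∫⁻ t in Ico 0 R, w t * tail F1 t with hAdef
    set B : ℝ → ℝ≥0∞ := fun R => ∫⁻ t in Ico 0 R, w t * tail F2 t with hBdef
    set η : ℝ≥0∞ := ENNReal.ofReal (ε/8) with hηdef
    have hwint : ∀ (μ : MeasureTheory.Measure ℝ) [IsProbabilityMeasure μ], ∀ p q : ℝ, p ≤ q →
        (∫⁻ t in Ico p q, w t * tail μ t) ≤ ENNReal.ofReal (Real.exp (γ*q) - Real.exp (γ*p)) := by
      intro μ _ p q hpq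
      calc (∫⁻ t in Ico p q, w t * tail μ t) ≤ ∫⁻ t in Ico p q, w t := by
            refine lintegral_mono fun t => ?_
            calc w t * tail μ t ≤ w t * 1 := mul_le_mul_right (tail_le_one μ t) _
              _ = w t := mul_one _
        _ = ENNReal.ofReal (Real.exp (γ*q) - Real.exp (γ*p)) := exp_lint hγpos hpq
    have hsplit : ∀ (μ : MeasureTheory.Measure ℝ), ∀ p q r : ℝ, p ≤ q → q ≤ r →
        (∫⁻ t in Ico p r, w t * tail μ t)
          = (∫⁻ t in Ico p q, w t * tail μ t) + (∫⁻ t in Ico q r, w t * tail μ t) := by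
      intro μ p q r hpq hqr
      rw [← Set.Ico_union_Ico_eq_Ico hpq hqr,
        MeasureTheory.lintegral_union measurableSet_Ico Set.Ico_disjoint_Ico_same]
    have hAmono : ∀ {p q : ℝ}, p ≤ q → A p ≤ A q := by
      intro p q hpq
      exact lintegral_mono_set (Set.Ico_subset_Ico le_rfl hpq)
    -- x0-integral small
    have hs0 : A x0 + B x0 ≤ ENNReal.ofReal (ε^2/64) := by
      have h1 := hwint F1 0 x0 hx0pos.le
      have h2 := hwint F2 0 x0 hx0pos.le
      have he : Real.exp (γ*x0) - Real.exp (γ*0) = ε^2/128 := by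
        rw [hexpx0, mul_zero, Real.exp_zero]; ring
      rw [he] at h1 h2
      calc A x0 + B x0 ≤ ENNReal.ofReal (ε^2/128) + ENNReal.ofReal (ε^2/128) :=
            add_le_add h1 h2
        _ = ENNReal.ofReal (ε^2/64) := by
            rw [← ENNReal.ofReal_add (by positivity) (by positivity)]; ring_nf
    -- the set S
    set S : Set ℝ := {R | 0 ≤ R ∧ A R + B R ≤ η} with hSdef
    have hx0S : x0 ∈ S := by
      refine ⟨hx0pos.le, le_trans hs0 ?_⟩
      rw [hηdef]
      exact ENNReal.ofReal_le_ofReal (by nlinarith)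
    -- S is bounded above
    have hdiv := heavy_sup F1 hγpos (hheavy γ hγpos)
    have htopne : η + 2 ≠ ⊤ := by
      refine ENNReal.add_ne_top.mpr ⟨ENNReal.ofReal_ne_top, ?_⟩
      norm_num
    have hbig : ∃ n : ℕ, η + 2 < ∫⁻ x, ENNReal.ofReal (Real.exp (γ * min x (n:ℝ))) ∂F1 := by
      refine lt_iSup_iff.mp ?_
      rw [hdiv]
      exact htopne.lt_top
    obtain ⟨n, hn⟩ := hbig
    have hAn : η < A (n:ℝ) := by
      rw [layer F1 hsupp1 hγpos (Nat.cast_nonneg n)] at hn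
      have h2 : (1:ℝ≥0∞) + (η + 1) < 1 + A (n:ℝ) := by
        calc (1:ℝ≥0∞) + (η + 1) = η + 2 := by ring
          _ < 1 + A (n:ℝ) := hn
      have h3 : η + 1 < A (n:ℝ) := (ENNReal.add_lt_add_iff_left ENNReal.one_ne_top).mp h2
      exact lt_of_le_of_lt le_self_add h3
    have hSbdd : BddAbove S := by
      refine ⟨(n:ℝ), fun R hR => ?_⟩
      by_contra hc'
      push_neg at hc'
      have h4 : A (n:ℝ) ≤ A R := hAmono hc'.le
      have h5 : A R ≤ A R + B R := le_self_add
      have : η < A R + B R := lt_of_lt_of_le hAn (le_trans h4 h5)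
      exact absurd hR.2 (not_le.mpr this)
    set Rs : ℝ := sSup S with hRsdef
    have hRsge : x0 ≤ Rs := le_csSup hSbdd hx0S
    set Δ : ℝ := min 1 (ε / (128 * (γ+1) * Real.exp (γ*(Rs+1)))) with hΔdef
    have hΔpos : 0 < Δ := lt_min one_pos (by positivity)
    have hΔle1 : Δ ≤ 1 := min_le_left _ _
    set R' : ℝ := Rs + Δ with hR'def
    obtain ⟨R'', hR''S, hR''gt⟩ := exists_lt_of_lt_csSup ⟨x0, hx0S⟩ (by linarith : Rs - Δ < Rs)
    have hR''le : R'' ≤ Rs := le_csSup hSbdd hR''S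
    have hR''0 : 0 ≤ R'' := hR''S.1
    have hR''R' : R'' ≤ R' := by simp only [hR'def]; linarith
    have hx0R' : x0 ≤ R' := by simp only [hR'def]; linarith
    have hR'0 : (0:ℝ) ≤ R' := le_trans hx0pos.le hx0R'
    -- upper bound on the increment
    have hincr : (∫⁻ t in Ico R'' R', w t * tail F1 t) + (∫⁻ t in Ico R'' R', w t * tail F2 t)
        ≤ ENNReal.ofReal (ε/16) := by
      have e1 := hwint F1 R'' R' hR''R'
      have e2 := hwint F2 R'' R' hR''R'
      have e3 : Real.exp (γ*R') - Real.exp (γ*R'') ≤ ε/32 := by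
        have key1 : Real.exp (γ*R') - Real.exp (γ*R'') ≤ γ*(R' - R'') * Real.exp (γ*R') := by
          have h6 := Real.add_one_le_exp (γ*(R'' - R'))
          have hexp : Real.exp (γ*R'') = Real.exp (γ*(R''-R')) * Real.exp (γ*R') := by
            rw [← Real.exp_add]; ring_nf
          nlinarith [Real.exp_pos (γ*R')]
        have h7 : R' - R'' ≤ 2*Δ := by simp only [hR'def]; linarith
        have h8 : Real.exp (γ*R') ≤ Real.exp (γ*(Rs+1)) := by
          refine Real.exp_le_exp.mpr (mul_le_mul_of_nonneg_left ?_ hγpos.le)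
          simp only [hR'def]; linarith
        have h9 : Δ ≤ ε / (128 * (γ+1) * Real.exp (γ*(Rs+1))) := min_le_right _ _
        have hE : (0:ℝ) < Real.exp (γ*(Rs+1)) := Real.exp_pos _
        have h10 : γ * (R' - R'') * Real.exp (γ*R') ≤ γ * (2*Δ) * Real.exp (γ*(Rs+1)) := by
          have h10a : γ * (R' - R'') ≤ γ * (2*Δ) := mul_le_mul_of_nonneg_left h7 hγpos.le
          calc γ * (R' - R'') * Real.exp (γ*R') ≤ γ * (2*Δ) * Real.exp (γ*R') :=
                mul_le_mul_of_nonneg_right h10a (Real.exp_pos _).le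
            _ ≤ γ * (2*Δ) * Real.exp (γ*(Rs+1)) :=
                mul_le_mul_of_nonneg_left h8 (by positivity)
        have h11 : γ * (2*Δ) * Real.exp (γ*(Rs+1)) ≤ ε/32 := by
          have h12 : Δ * Real.exp (γ*(Rs+1)) ≤ ε / (128*(γ+1)) := by
            rw [div_mul_eq_div_div] at h9
            calc Δ * Real.exp (γ*(Rs+1))
                ≤ (ε / (128*(γ+1)) / Real.exp (γ*(Rs+1))) * Real.exp (γ*(Rs+1)) := by
                  exact mul_le_mul_of_nonneg_right h9 hE.le
              _ = ε / (128*(γ+1)) := div_mul_cancel₀ _ hE.ne'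
          have h13 : γ / (γ+1) ≤ 1 := by
            rw [div_le_one (by linarith)]; linarith
          calc γ * (2*Δ) * Real.exp (γ*(Rs+1)) = 2 * γ * (Δ * Real.exp (γ*(Rs+1))) := by ring
            _ ≤ 2 * γ * (ε / (128*(γ+1))) := by
                refine mul_le_mul_of_nonneg_left h12 (by positivity)
            _ = (γ/(γ+1)) * (ε/64) := by field_simp; ring
            _ ≤ 1 * (ε/64) := mul_le_mul_of_nonneg_right h13 (by positivity)
            _ ≤ ε/32 := by linarith
        linarith
      calc (∫⁻ t in Ico R'' R', w t * tail F1 t) + (∫⁻ t in Ico R'' R', w t * tail F2 t)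
          ≤ ENNReal.ofReal (Real.exp (γ*R') - Real.exp (γ*R''))
            + ENNReal.ofReal (Real.exp (γ*R') - Real.exp (γ*R'')) := add_le_add e1 e2
        _ ≤ ENNReal.ofReal (ε/32) + ENNReal.ofReal (ε/32) :=
            add_le_add (ENNReal.ofReal_le_ofReal e3) (ENNReal.ofReal_le_ofReal e3)
        _ = ENNReal.ofReal (ε/16) := by
            rw [← ENNReal.ofReal_add (by positivity) (by positivity)]; ring_nf
    -- upper bound on A R' + B R'
    have hsplitA : A R' = A R'' + ∫⁻ t in Ico R'' R', w t * tail F1 t :=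
      hsplit F1 0 R'' R' hR''0 hR''R'
    have hsplitB : B R' = B R'' + ∫⁻ t in Ico R'' R', w t * tail F2 t :=
      hsplit F2 0 R'' R' hR''0 hR''R'
    have hup : A R' + B R' ≤ ENNReal.ofReal (ε/4) := by
      rw [hsplitA, hsplitB]
      calc A R'' + (∫⁻ t in Ico R'' R', w t * tail F1 t)
            + (B R'' + ∫⁻ t in Ico R'' R', w t * tail F2 t)
          = (A R'' + B R'') + ((∫⁻ t in Ico R'' R', w t * tail F1 t)
            + (∫⁻ t in Ico R'' R', w t * tail F2 t)) := by ring
        _ ≤ η + ENNReal.ofReal (ε/16) := add_le_add hR''S.2 hincr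
        _ = ENNReal.ofReal (ε/8 + ε/16) := by
            rw [hηdef, ← ENNReal.ofReal_add (by positivity) (by positivity)]
        _ ≤ ENNReal.ofReal (ε/4) := ENNReal.ofReal_le_ofReal (by linarith)
    -- lower bound on A R' + B R'
    have hR'notS : R' ∉ S := by
      intro hmem
      have := le_csSup hSbdd hmem
      simp only [hR'def] at this
      linarith [this]
    have hlo : η ≤ A R' + B R' := by
      by_contra hcon
      push_neg at hcon
      exact hR'notS ⟨hR'0, hcon.le⟩
    -- the submultiplicativity chain
    have hLG := layer (mconv F1 F2) hGsupp hγpos hR'0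
    have hL1 := layer F1 hsupp1 hγpos hR'0
    have hL2 := layer F2 hsupp2 hγpos hR'0
    have hsm := submult F1 F2 hsupp1 hsupp2 hγpos hR'0
    rw [hLG, hL1, hL2] at hsm
    set hh : ℝ≥0∞ := ∫⁻ t in Ico 0 R', w t * tail (mconv F1 F2) t with hhdef
    have hCle : hh ≤ A R' + B R' + A R' * B R' := by
      have h14 : (1 + A R') * (1 + B R') = 1 + (A R' + B R' + A R' * B R') := by ring
      rw [h14] at hsm
      exact (ENNReal.add_le_add_iff_left ENNReal.one_ne_top).mp hsm
    -- hypothesis integrated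
    have hcs1 : c * ((∫⁻ t in Ico x0 R', w t * tail F1 t)
        + (∫⁻ t in Ico x0 R', w t * tail F2 t)) ≤ hh := by
      have hm1 : Measurable fun t => w t * tail F1 t := hwm.mul (tail_meas F1)
      have hm2 : Measurable fun t => w t * tail F2 t := hwm.mul (tail_meas F2)
      rw [mul_add, ← MeasureTheory.lintegral_const_mul c hm1,
        ← MeasureTheory.lintegral_const_mul c hm2,
        ← MeasureTheory.lintegral_add_left (hm1.const_mul c)]
      calc ∫⁻ t in Ico x0 R', (c * (w t * tail F1 t) + c * (w t * tail F2 t))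
          ≤ ∫⁻ t in Ico x0 R', w t * tail (mconv F1 F2) t := by
            refine MeasureTheory.setLIntegral_mono (hwm.mul (tail_meas (mconv F1 F2))) ?_
            intro t ht
            have h15 : c * (w t * tail F1 t) + c * (w t * tail F2 t)
                = w t * (c * (tail F1 t + tail F2 t)) := by ring
            rw [h15]
            exact mul_le_mul_right (hhyp t ht.1) _
        _ ≤ hh := lintegral_mono_set (Set.Ico_subset_Ico hx0pos.le le_rfl)
    -- main inequality
    have hsplitA2 : A R' = A x0 + ∫⁻ t in Ico x0 R', w t * tail F1 t :=
      hsplit F1 0 x0 R' hx0pos.le hx0R'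
    have hsplitB2 : B R' = B x0 + ∫⁻ t in Ico x0 R', w t * tail F2 t :=
      hsplit F2 0 x0 R' hx0pos.le hx0R'
    have hmain : c * (A R' + B R') ≤ ENNReal.ofReal (ε^2/32) + hh := by
      have e4 : A R' + B R' = (A x0 + B x0) + ((∫⁻ t in Ico x0 R', w t * tail F1 t)
          + (∫⁻ t in Ico x0 R', w t * tail F2 t)) := by
        rw [hsplitA2, hsplitB2]; ring
      rw [e4, mul_add]
      refine add_le_add ?_ hcs1
      calc c * (A x0 + B x0) ≤ 2 * ENNReal.ofReal (ε^2/64) := by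
            refine mul_le_mul' ?_ hs0
            exact hc32.le
        _ = ENNReal.ofReal (ε^2/32) := by
            rw [show (2:ℝ≥0∞) = ENNReal.ofReal 2 by norm_num,
              ← ENNReal.ofReal_mul (by norm_num)]
            ring_nf
    -- cancel and conclude
    have hfin : A R' + B R' ≠ ⊤ := (lt_of_le_of_lt hup ENNReal.ofReal_lt_top).ne
    have hab : A R' * B R' ≤ ENNReal.ofReal (ε^2/16) := by
      have haup : A R' ≤ ENNReal.ofReal (ε/4) := le_trans le_self_add hup
      have hbup : B R' ≤ ENNReal.ofReal (ε/4) := le_trans le_add_self hup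
      calc A R' * B R' ≤ ENNReal.ofReal (ε/4) * ENNReal.ofReal (ε/4) := mul_le_mul' haup hbup
        _ = ENNReal.ofReal (ε^2/16) := by
            rw [← ENNReal.ofReal_mul (by positivity)]; ring_nf
    have hstep : ENNReal.ofReal ε * (A R' + B R')
        ≤ ENNReal.ofReal (ε^2/32) + ENNReal.ofReal (ε^2/16) := by
      have h16 : (A R' + B R') + ENNReal.ofReal ε * (A R' + B R')
          ≤ (A R' + B R') + (ENNReal.ofReal (ε^2/32) + ENNReal.ofReal (ε^2/16)) := by
        calc (A R' + B R') + ENNReal.ofReal ε * (A R' + B R')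
            = c * (A R' + B R') := by rw [hc1', add_mul, one_mul]
          _ ≤ ENNReal.ofReal (ε^2/32) + hh := hmain
          _ ≤ ENNReal.ofReal (ε^2/32) + (A R' + B R' + A R' * B R') := add_le_add_right hCle _
          _ ≤ ENNReal.ofReal (ε^2/32) + (A R' + B R' + ENNReal.ofReal (ε^2/16)) :=
              add_le_add_right (add_le_add_right hab _) _
          _ = (A R' + B R') + (ENNReal.ofReal (ε^2/32) + ENNReal.ofReal (ε^2/16)) := by ring
      exact (ENNReal.add_le_add_iff_left hfin).mp h16
    have hfinal : ENNReal.ofReal (ε^2/8) ≤ ENNReal.ofReal (3*ε^2/32) := by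
      calc ENNReal.ofReal (ε^2/8) = ENNReal.ofReal ε * η := by
            rw [hηdef, ← ENNReal.ofReal_mul hεpos.le]
            ring_nf
        _ ≤ ENNReal.ofReal ε * (A R' + B R') := mul_le_mul_right hlo _
        _ ≤ ENNReal.ofReal (ε^2/32) + ENNReal.ofReal (ε^2/16) := hstep
        _ = ENNReal.ofReal (3*ε^2/32) := by
            rw [← ENNReal.ofReal_add (by positivity) (by positivity)]; ring_nf
    rw [ENNReal.ofReal_le_ofReal_iff (by positivity)] at hfinal
    have hsq : (0:ℝ) < ε^2 := by positivity
    linarith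
end
end

section
/- There exists a light-tailed distribution F on [0,∞) with 0 < γ̂ < ∞ and φ(γ̂) ∈ (1,∞) for which liminf_{x→∞} (F*F)‾(x)/F̄(x) = 2 < 2φ(γ̂). Concretely, the atomic distribution with atoms at x_n = 3^n of mass p_n = c e^{−γ̂ 3^n} 3^{−n} (c normalizing) has this property. -/
open MeasureTheory Filter Real Set
open scoped ENNReal Topology

noncomputable section

namespace S18

def q (n : ℕ) : ℝ := Real.exp (-1 * 3 ^ n) * (3:ℝ) ^ (-(n:ℤ))

lemma zpow_eq (n : ℕ) : (3:ℝ) ^ (-(n:ℤ)) = (3:ℝ)⁻¹ ^ n := by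
  rw [zpow_neg, zpow_natCast, inv_pow]

lemma q_pos (n : ℕ) : 0 < q n := by
  unfold q; positivity

lemma q_le (n : ℕ) : q n ≤ Real.exp (-1) * (3:ℝ)⁻¹ ^ n := by
  unfold q
  rw [zpow_eq]
  gcongr
  · have : (1:ℝ) ≤ 3 ^ n := one_le_pow₀ (by norm_num)
    nlinarith

lemma summable_q : Summable q := by
  refine Summable.of_nonneg_of_le (fun n => (q_pos n).le) q_le ?_
  exact (summable_geometric_of_lt_one (by norm_num) (by norm_num)).mul_left _

def S : ℝ := ∑' n, q n

lemma tsum_geom : ∑' n : ℕ, (3:ℝ)⁻¹ ^ n = 3/2 := by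
  rw [tsum_geometric_of_lt_one (by norm_num) (by norm_num)]; norm_num

lemma S_pos : 0 < S := by
  have := summable_q
  exact Summable.tsum_pos this (fun n => (q_pos n).le) 0 (q_pos 0)

lemma S_lt : S < 3/2 := by
  have h1 : S ≤ Real.exp (-1) * (3/2) := by
    calc S ≤ ∑' n, Real.exp (-1) * (3:ℝ)⁻¹ ^ n := by
          refine Summable.tsum_le_tsum q_le summable_q ?_
          exact (summable_geometric_of_lt_one (by norm_num) (by norm_num)).mul_left _
      _ = Real.exp (-1) * (3/2) := by rw [tsum_mul_left, tsum_geom]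
  have h2 : Real.exp (-1) < 1 := by
    rw [Real.exp_lt_one_iff]; norm_num
  nlinarith

def c : ℝ := S⁻¹

lemma c_pos : 0 < c := inv_pos.2 S_pos

lemma c_gt : 2/3 < c := by
  have := S_lt; have := S_pos
  rw [c, lt_inv_comm₀] <;> norm_num <;> linarith

def p (n : ℕ) : ℝ := c * Real.exp (-1 * 3 ^ n) * (3:ℝ) ^ (-(n:ℤ))

lemma p_eq (n : ℕ) : p n = c * q n := by unfold p q; ring

lemma p_pos (n : ℕ) : 0 < p n := by rw [p_eq]; exact mul_pos c_pos (q_pos n)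

lemma summable_p : Summable p := by
  simp only [funext p_eq]
  exact summable_q.mul_left c

lemma tsum_p : ∑' n, p n = 1 := by
  simp only [funext p_eq]
  rw [tsum_mul_left]
  exact inv_mul_cancel₀ S_pos.ne'

lemma sq_le_exp {t : ℝ} (ht : 0 ≤ t) : t^2/4 ≤ Real.exp t := by
  have h := Real.add_one_le_exp (t/2)
  have h2 : Real.exp t = Real.exp (t/2) ^ 2 := by
    rw [← Real.exp_nat_mul]; ring_nf
  nlinarith [Real.exp_pos (t/2)]


lemma q_def (n : ℕ) : q n = Real.exp (-1 * 3 ^ n) * (3:ℝ) ^ (-(n:ℤ)) := rfl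
lemma p_def (n : ℕ) : p n = c * Real.exp (-1 * 3 ^ n) * (3:ℝ) ^ (-(n:ℤ)) := rfl

def F : Measure ℝ := Measure.sum (fun n : ℕ =>
  (ENNReal.ofReal (p n)) • Measure.dirac ((3:ℝ)^n))

lemma F_apply {A : Set ℝ} (hA : MeasurableSet A) :
    F A = ∑' n, ENNReal.ofReal (p n) * A.indicator (fun _ => 1) ((3:ℝ)^n) := by
  rw [F, Measure.sum_apply _ hA]
  congr 1; ext n
  rw [Measure.smul_apply, Measure.dirac_apply' _ hA, smul_eq_mul]; rfl

lemma F_univ : F univ = 1 := by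
  rw [F_apply MeasurableSet.univ]
  simp only [indicator_univ, mul_one]
  rw [← ENNReal.ofReal_tsum_of_nonneg (fun n => (p_pos n).le) summable_p, tsum_p,
    ENNReal.ofReal_one]

instance F_prob : IsProbabilityMeasure F := ⟨F_univ⟩

lemma F_Iio : F (Iio 0) = 0 := by
  rw [F_apply measurableSet_Iio]
  have : ∀ n : ℕ, (Iio (0:ℝ)).indicator (fun _ => (1:ℝ≥0∞)) ((3:ℝ)^n) = 0 := by
    intro n
    rw [indicator_of_notMem]
    simp only [mem_Iio, not_lt]
    positivity
  simp [this]

lemma F_Ici : F (Ici (0:ℝ)) = 1 := by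
  have h := measure_compl (μ := F) (s := Iio 0) measurableSet_Iio (measure_ne_top F _)
  rw [compl_Iio] at h
  rw [h, F_Iio, F_univ, tsub_zero]

lemma tail_F_pos (x : ℝ) : F (Ioi x) ≠ 0 := by
  obtain ⟨N, hN⟩ := pow_unbounded_of_one_lt x (by norm_num : (1:ℝ) < 3)
  rw [F_apply measurableSet_Ioi]
  intro h
  have h2 := ENNReal.le_tsum (f := fun n => ENNReal.ofReal (p n) *
      (Ioi x).indicator (fun _ => (1:ℝ≥0∞)) ((3:ℝ)^n)) N
  rw [h, Set.indicator_of_mem (Set.mem_Ioi.mpr hN) (f := fun _ => (1:ℝ≥0∞))] at h2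
  simp only [mul_one, nonpos_iff_eq_zero, ENNReal.ofReal_eq_zero] at h2
  exact absurd h2 (not_le.2 (p_pos N))

lemma atoms_ae : ∀ᵐ x ∂F, x ∈ range (fun n : ℕ => (3:ℝ)^n) := by
  rw [ae_iff]
  have hm : MeasurableSet {x : ℝ | x ∉ range (fun n : ℕ => (3:ℝ)^n)} := by
    have : ({x : ℝ | x ∉ range (fun n : ℕ => (3:ℝ)^n)}) = (range (fun n : ℕ => (3:ℝ)^n))ᶜ := rfl
    rw [this]
    exact ((countable_range _).measurableSet).compl
  rw [F_apply hm]
  have : ∀ n : ℕ, ({x : ℝ | x ∉ range (fun n : ℕ => (3:ℝ)^n)}).indicator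
      (fun _ => (1:ℝ≥0∞)) ((3:ℝ)^n) = 0 := by
    intro n
    rw [indicator_of_notMem]
    simp only [mem_setOf_eq, not_not]
    exact ⟨n, rfl⟩
  simp [this]

lemma nonneg_ae : ∀ᵐ x ∂F, 0 ≤ x := by
  rw [ae_iff]
  have : {x : ℝ | ¬ 0 ≤ x} = Iio 0 := by ext x; simp
  rw [this]; exact F_Iio

lemma tendsto_tail : Tendsto (fun x => F (Ioi x)) atTop (𝓝 0) := by
  have h1 : Tendsto (fun x => F (Iic x)) atTop (𝓝 1) := by
    have := tendsto_measure_Iic_atTop (μ := F)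
    rwa [F_univ] at this
  have h2 : Tendsto (fun x => 1 - F (Iic x)) atTop (𝓝 (1 - 1)) :=
    (ENNReal.continuous_sub_left (by norm_num)).continuousAt.tendsto.comp h1
  simp only [tsub_self] at h2
  refine h2.congr (fun x => ?_)
  have := measure_compl (μ := F) (s := Iic x) measurableSet_Iic (measure_ne_top F _)
  rw [compl_Iic] at this
  rw [this, F_univ]


lemma phi_eq (γ : ℝ) :
    phi F γ = ∑' n, ENNReal.ofReal (p n * Real.exp (γ * 3 ^ n)) := by
  rw [phi, F, lintegral_sum_measure]
  congr 1; ext n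
  rw [lintegral_smul_measure, lintegral_dirac]
  exact (ENNReal.ofReal_mul (p_pos n).le).symm

lemma phi_term_one (n : ℕ) : p n * Real.exp (1 * 3 ^ n) = c * (3:ℝ)⁻¹ ^ n := by
  rw [p_eq, q_def, zpow_eq]
  rw [show (-1 : ℝ) * 3 ^ n = -(1 * 3 ^ n) by ring, Real.exp_neg]
  have := (Real.exp_pos ((1:ℝ) * 3 ^ n)).ne'
  field_simp

lemma phi_one : phi F 1 = ENNReal.ofReal (c * (3/2)) := by
  rw [phi_eq]
  simp only [phi_term_one]
  have h1 : ∀ n : ℕ, ENNReal.ofReal (c * (3:ℝ)⁻¹ ^ n)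
      = ENNReal.ofReal c * (ENNReal.ofReal (3:ℝ)⁻¹) ^ n := by
    intro n
    rw [ENNReal.ofReal_mul c_pos.le, ENNReal.ofReal_pow (by norm_num)]
  simp only [h1]
  rw [ENNReal.tsum_mul_left, ENNReal.tsum_geometric]
  have h2 : (1 : ℝ≥0∞) - ENNReal.ofReal (3:ℝ)⁻¹ = ENNReal.ofReal (2/3) := by
    rw [← ENNReal.ofReal_one, ← ENNReal.ofReal_sub _ (by norm_num)]
    norm_num
  rw [h2, ← ENNReal.ofReal_inv_of_pos (by norm_num),
    show ((2:ℝ)/3)⁻¹ = 3/2 by norm_num, ← ENNReal.ofReal_mul c_pos.le]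

lemma phi_one_lt_top : phi F 1 < ⊤ := by rw [phi_one]; exact ENNReal.ofReal_lt_top

lemma one_lt_phi_one : 1 < phi F 1 := by
  rw [phi_one, ENNReal.one_lt_ofReal]
  nlinarith [c_gt]

lemma phi_top {γ : ℝ} (hγ : 1 < γ) : phi F γ = ⊤ := by
  rw [phi_eq]
  by_contra h
  have h0 : ∑' n, ENNReal.ofReal (p n * Real.exp (γ * 3 ^ n)) ≠ ⊤ := h
  have htend := ENNReal.tendsto_atTop_zero_of_tsum_ne_top h0
  set ε : ℝ≥0∞ := ENNReal.ofReal (c * (γ-1)^2/4) with hε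
  have hεpos : 0 < ε := by
    rw [hε, ENNReal.ofReal_pos]
    nlinarith [c_pos, mul_pos (sub_pos.2 hγ) (sub_pos.2 hγ), sq_nonneg (γ-1)]
  have hlb : ∀ n : ℕ, ε ≤ ENNReal.ofReal (p n * Real.exp (γ * 3 ^ n)) := by
    intro n
    rw [hε]
    apply ENNReal.ofReal_le_ofReal
    have h3 : (0:ℝ) < 3 ^ n := by positivity
    have key : ((γ-1) * 3 ^ n)^2/4 ≤ Real.exp ((γ-1) * 3 ^ n) :=
      sq_le_exp (by nlinarith)
    have hsplit : Real.exp (γ * 3 ^ n) = Real.exp ((γ-1) * 3 ^ n) * Real.exp (1 * 3 ^ n) := by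
      rw [← Real.exp_add]; ring_nf
    have h1 : p n * Real.exp (1 * 3 ^ n) = c * (3:ℝ)⁻¹ ^ n := phi_term_one n
    have h2 : p n * Real.exp (γ * 3 ^ n) = c * (3:ℝ)⁻¹ ^ n * Real.exp ((γ-1) * 3 ^ n) := by
      rw [hsplit, ← h1]; ring
    rw [h2]
    have hinv : (3:ℝ)⁻¹ ^ n * (3:ℝ)^n = 1 := by
      rw [inv_pow, inv_mul_cancel₀ (by positivity)]
    have hge : (3:ℝ)⁻¹ ^ n * Real.exp ((γ-1) * 3 ^ n) ≥ (γ-1)^2/4 := by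
      have hp : (0:ℝ) < (3:ℝ)⁻¹ ^ n := by positivity
      calc (3:ℝ)⁻¹ ^ n * Real.exp ((γ-1) * 3 ^ n)
          ≥ (3:ℝ)⁻¹ ^ n * (((γ-1) * 3 ^ n)^2/4) := by gcongr
        _ = (γ-1)^2/4 * ((3:ℝ)⁻¹ ^ n * (3:ℝ)^n) * 3 ^ n := by ring
        _ = (γ-1)^2/4 * 3 ^ n := by rw [hinv]; ring
        _ ≥ (γ-1)^2/4 * 1 := by
            have h1 : (1:ℝ) ≤ (3:ℝ) ^ n := one_le_pow₀ (by norm_num)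
            nlinarith [sq_nonneg (γ-1)]
        _ = (γ-1)^2/4 := by ring
    calc c * (γ-1)^2/4 = c * ((γ-1)^2/4) := by ring
      _ ≤ c * ((3:ℝ)⁻¹ ^ n * Real.exp ((γ-1) * 3 ^ n)) :=
          mul_le_mul_of_nonneg_left hge c_pos.le
      _ = c * (3:ℝ)⁻¹ ^ n * Real.exp ((γ-1) * 3 ^ n) := by ring
  have := (htend.eventually_lt_const hεpos).exists
  obtain ⟨n, hn⟩ := this
  exact absurd (hlb n) (not_le.2 hn)

lemma gammaHat_F : gammaHat F = 1 := by
  apply le_antisymm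
  · apply sSup_le
    rintro x ⟨γ, rfl, hfin⟩
    have : γ ≤ 1 := by
      by_contra h
      rw [phi_top (not_le.1 h)] at hfin
      exact absurd hfin (lt_irrefl _)
    calc ENNReal.ofReal γ ≤ ENNReal.ofReal 1 := ENNReal.ofReal_le_ofReal this
      _ = 1 := ENNReal.ofReal_one
  · apply le_sSup
    exact ⟨1, by rw [ENNReal.ofReal_one], phi_one_lt_top⟩

lemma phi_mono {γ₁ γ₂ : ℝ} (h : γ₁ ≤ γ₂) : phi F γ₁ ≤ phi F γ₂ := by
  rw [phi_eq, phi_eq]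
  refine ENNReal.tsum_le_tsum (fun n => ?_)
  apply ENNReal.ofReal_le_ofReal
  have h3 : (0:ℝ) ≤ 3 ^ n := by positivity
  have := Real.exp_le_exp.2 (mul_le_mul_of_nonneg_right h h3)
  nlinarith [p_pos n, Real.exp_pos (γ₁ * 3 ^ n)]

lemma phiHat_le : phiHat F ≤ phi F 1 := by
  rw [phiHat]
  refine iSup₂_le (fun γ hγ => ?_)
  apply phi_mono
  rcases hγ with hγ | hγ
  · rw [gammaHat_F] at hγ
    exact (ENNReal.ofReal_lt_one.1 hγ).le
  · linarith

lemma phiHat_ge : phi F 1 ≤ phiHat F := by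
  set g : ℕ → ℝ := fun k => 1 - ((k:ℝ)+1)⁻¹ with hg
  have hglt : ∀ k, g k < 1 := by
    intro k; rw [hg]
    have : (0:ℝ) < ((k:ℝ)+1)⁻¹ := by positivity
    simp only []
    linarith
  have hgle : ∀ k, g k ≤ 1 := fun k => (hglt k).le
  have hgmono : Monotone g := by
    intro a b hab
    simp only [hg]
    have : ((b:ℝ)+1)⁻¹ ≤ ((a:ℝ)+1)⁻¹ := by
      apply inv_anti₀ (by positivity)
      have : (a:ℝ) ≤ b := Nat.cast_le.2 hab
      linarith
    linarith
  have hgtend : Tendsto g atTop (𝓝 1) := by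
    have h0 : Tendsto (fun k : ℕ => ((k:ℝ)+1)⁻¹) atTop (𝓝 0) := by
      have := tendsto_one_div_add_atTop_nhds_zero_nat (𝕜 := ℝ)
      simpa [one_div] using this
    have := (tendsto_const_nhds (x := (1:ℝ)) (f := atTop)).sub h0
    simpa using this
  -- MCT
  have hmeas : ∀ k : ℕ, AEMeasurable (fun x : ℝ => ENNReal.ofReal (Real.exp (g k * x))) F := by
    intro k
    exact (ENNReal.continuous_ofReal.comp ((Real.continuous_exp.comp
      (continuous_const.mul continuous_id)))).measurable.aemeasurable
  have hmono : ∀ᵐ x ∂F, Monotone fun k => ENNReal.ofReal (Real.exp (g k * x)) := by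
    filter_upwards [nonneg_ae] with x hx
    intro a b hab
    apply ENNReal.ofReal_le_ofReal
    apply Real.exp_le_exp.2
    exact mul_le_mul_of_nonneg_right (hgmono hab) hx
  have hMCT := lintegral_iSup' hmeas hmono
  have hsup_eq : ∫⁻ x, ⨆ k, ENNReal.ofReal (Real.exp (g k * x)) ∂F = phi F 1 := by
    rw [phi]
    apply lintegral_congr_ae
    filter_upwards [nonneg_ae] with x hx
    apply le_antisymm
    · refine iSup_le (fun k => ?_)
      apply ENNReal.ofReal_le_ofReal
      apply Real.exp_le_exp.2
      exact mul_le_mul_of_nonneg_right (hgle k) hx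
    · have htend : Tendsto (fun k => ENNReal.ofReal (Real.exp (g k * x))) atTop
          (𝓝 (ENNReal.ofReal (Real.exp (1 * x)))) := by
        apply (ENNReal.continuous_ofReal.tendsto _).comp
        apply (Real.continuous_exp.tendsto _).comp
        exact hgtend.mul_const x
      exact le_of_tendsto htend (Eventually.of_forall (fun k => le_iSup
        (fun k => ENNReal.ofReal (Real.exp (g k * x))) k))
  rw [← hsup_eq, hMCT]
  refine iSup_le (fun k => ?_)
  rw [phiHat]
  have hcond : ENNReal.ofReal (g k) < gammaHat F ∨ g k < 0 := by
    left; rw [gammaHat_F]; exact ENNReal.ofReal_lt_one.2 (hglt k)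
  exact le_iSup₂ (f := fun (γ : ℝ) (_ : ENNReal.ofReal γ < gammaHat F ∨ γ < 0) => phi F γ)
    (g k) hcond

lemma one_lt_phiHat : 1 < phiHat F := lt_of_lt_of_le one_lt_phi_one phiHat_ge
lemma phiHat_lt_top : phiHat F < ⊤ := lt_of_le_of_lt phiHat_le phi_one_lt_top


lemma tail_mconv (x : ℝ) :
    tail (mconv F F) x = (F.prod F) {q : ℝ × ℝ | x < q.1 + q.2} := by
  rw [tail, mconv, Measure.map_apply measurable_add measurableSet_Ioi]
  rfl

lemma tail_ne_top (x : ℝ) : tail F x ≠ ⊤ := measure_ne_top F _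

-- lower bound: for x ≥ 0, 2 - tail F x ≤ tail (mconv F F) x / tail F x
lemma lower_bound {x : ℝ} (hx : 0 ≤ x) :
    (2 : ℝ≥0∞) - tail F x ≤ tail (mconv F F) x / tail F x := by
  set T := tail F x with hT
  set A : Set (ℝ × ℝ) := Ioi x ×ˢ Ici (0:ℝ) with hA
  set B : Set (ℝ × ℝ) := Ici (0:ℝ) ×ˢ Ioi x with hB
  have hAm : MeasurableSet A := measurableSet_Ioi.prod measurableSet_Ici
  have hBm : MeasurableSet B := measurableSet_Ici.prod measurableSet_Ioi
  have hsub : A ∪ B ⊆ {q : ℝ × ℝ | x < q.1 + q.2} := by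
    rintro ⟨a, b⟩ (⟨ha, hb⟩ | ⟨ha, hb⟩) <;> simp only [mem_setOf_eq]
    · simp only [mem_Ioi] at ha; simp only [mem_Ici] at hb; linarith
    · simp only [mem_Ici] at ha; simp only [mem_Ioi] at hb; linarith
  have hμA : (F.prod F) A = T := by
    rw [hA, Measure.prod_prod, F_Ici, mul_one]; rfl
  have hμB : (F.prod F) B = T := by
    rw [hB, Measure.prod_prod, F_Ici, one_mul]; rfl
  have hAB : A ∩ B = Ioi x ×ˢ Ioi x := by
    rw [hA, hB, Set.prod_inter_prod]
    congr 1
    · exact inter_eq_left.2 (fun y hy => le_trans hx (le_of_lt hy))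
    · exact inter_eq_right.2 (fun y hy => le_trans hx (le_of_lt hy))
  have hμAB : (F.prod F) (A ∩ B) = T * T := by
    rw [hAB, Measure.prod_prod]; rfl
  have hincl : (F.prod F) (A ∪ B) + T * T = T + T := by
    have h := measure_union_add_inter (μ := F.prod F) A hBm
    rw [hμA, hμB, hμAB] at h
    exact h
  have hkey : T + T ≤ (F.prod F) {q : ℝ × ℝ | x < q.1 + q.2} + T * T := by
    rw [← hincl]
    gcongr
  -- now: (2 - T) ≤ μS / T
  have hT0 : T ≠ 0 := tail_F_pos x
  have hTtop : T ≠ ⊤ := tail_ne_top x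
  rw [ENNReal.le_div_iff_mul_le (Or.inl hT0) (Or.inl hTtop)]
  rw [ENNReal.sub_mul (fun _ _ => hTtop)]
  rw [two_mul]
  refine tsub_le_iff_right.2 ?_
  rw [tail_mconv]
  exact hkey

-- key arithmetic for upper bound
lemma arith {m n k : ℕ} (h : 2 * (3:ℝ)^k < (3:ℝ)^m + (3:ℝ)^n) :
    2 * (3:ℝ)^k < (3:ℝ)^m ∨ 2 * (3:ℝ)^k < (3:ℝ)^n := by
  by_contra hc
  push_neg at hc
  obtain ⟨h1, h2⟩ := hc
  have key : ∀ j : ℕ, (3:ℝ)^j ≤ 2 * (3:ℝ)^k → (3:ℝ)^j ≤ (3:ℝ)^k := by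
    intro j hj
    have hlt : (3:ℝ)^j < 3^(k+1) := by
      rw [pow_succ]
      have : (0:ℝ) < 3^k := by positivity
      nlinarith
    have hjk : j < k + 1 := by
      by_contra hjk
      push_neg at hjk
      exact absurd (pow_le_pow_right₀ (by norm_num : (1:ℝ) ≤ 3) hjk) (not_le.2 hlt)
    exact pow_le_pow_right₀ (by norm_num : (1:ℝ) ≤ 3) (Nat.lt_succ_iff.1 hjk)
  have := key m h1
  have := key n h2
  have : (0:ℝ) < 3^k := by positivity
  linarith

lemma F_compl_atoms : F ((range (fun n : ℕ => (3:ℝ)^n))ᶜ) = 0 := by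
  have h := atoms_ae
  rw [ae_iff] at h
  convert h using 2
  rfl

lemma prod_atoms_ae : ∀ᵐ q ∂(F.prod F),
    q.1 ∈ range (fun n : ℕ => (3:ℝ)^n) ∧ q.2 ∈ range (fun n : ℕ => (3:ℝ)^n) := by
  rw [ae_iff]
  refine measure_mono_null
    (t := ((range (fun n : ℕ => (3:ℝ)^n))ᶜ ×ˢ (univ : Set ℝ)) ∪
      ((univ : Set ℝ) ×ˢ (range (fun n : ℕ => (3:ℝ)^n))ᶜ)) ?_ ?_
  · intro q hq
    simp only [mem_setOf_eq, not_and_or] at hq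
    rcases hq with h | h
    · exact Or.inl ⟨h, mem_univ _⟩
    · exact Or.inr ⟨mem_univ _, h⟩
  · refine le_antisymm (le_trans (measure_union_le _ _) ?_) zero_le
    rw [Measure.prod_prod, Measure.prod_prod, F_compl_atoms]
    simp only [zero_mul, mul_zero, add_zero, le_refl]

lemma upper_bound (k : ℕ) :
    tail (mconv F F) (2 * 3^k) / tail F (2 * 3^k) ≤ 2 := by
  set x : ℝ := 2 * 3^k with hx
  set T := tail F x with hT
  have hT0 : T ≠ 0 := tail_F_pos x
  have hTtop : T ≠ ⊤ := tail_ne_top x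
  set C : Set (ℝ × ℝ) := (Ioi x ×ˢ (univ : Set ℝ)) ∪ ((univ : Set ℝ) ×ˢ Ioi x) with hC
  have hμC : (F.prod F) C ≤ T + T := by
    refine le_trans (measure_union_le _ _) ?_
    rw [Measure.prod_prod, Measure.prod_prod, F_univ, mul_one, one_mul]
    exact le_rfl
  have hae : {q : ℝ × ℝ | x < q.1 + q.2} ≤ᵐ[F.prod F] C := by
    filter_upwards [prod_atoms_ae] with q hq hmem
    obtain ⟨⟨m, hm⟩, ⟨n, hn⟩⟩ := hq
    simp only at hm hn
    have hmem2 : x < q.1 + q.2 := hmem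
    have hmem' : x < (3:ℝ)^m + (3:ℝ)^n := by rw [hm, hn]; exact hmem2
    rcases arith (hx ▸ hmem') with h | h
    · left
      refine ⟨?_, mem_univ _⟩
      show x < q.1
      rw [← hm, hx]
      exact h
    · right
      refine ⟨mem_univ _, ?_⟩
      show x < q.2
      rw [← hn, hx]
      exact h
  have hle : tail (mconv F F) x ≤ T + T := by
    rw [tail_mconv]
    exact le_trans (measure_mono_ae hae) hμC
  rw [ENNReal.div_le_iff_le_mul (Or.inl hT0) (Or.inl hTtop)]
  rw [two_mul]
  exact hle


lemma liminf_eq_two :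
    liminf (fun x : ℝ => tail (mconv F F) x / tail F x) atTop = 2 := by
  apply le_antisymm
  · apply liminf_le_of_frequently_le (hu_le := ⟨0, Eventually.of_forall (fun x => zero_le)⟩)
    rw [frequently_atTop]
    intro a
    obtain ⟨k, hk⟩ := pow_unbounded_of_one_lt a (by norm_num : (1:ℝ) < 3)
    refine ⟨2 * 3^k, ?_, upper_bound k⟩
    have h3 : (0:ℝ) < 3^k := by positivity
    nlinarith
  · have hev : ∀ᶠ x : ℝ in atTop, (2 : ℝ≥0∞) - tail F x ≤
        tail (mconv F F) x / tail F x := by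
      filter_upwards [eventually_ge_atTop (0:ℝ)] with x hx
      exact lower_bound hx
    have h1 : liminf (fun x : ℝ => (2 : ℝ≥0∞) - tail F x) atTop ≤
        liminf (fun x : ℝ => tail (mconv F F) x / tail F x) atTop :=
      liminf_le_liminf hev
    have h2 : Tendsto (fun x : ℝ => (2 : ℝ≥0∞) - tail F x) atTop (𝓝 2) := by
      have hcont : ContinuousAt (fun y : ℝ≥0∞ => 2 - y) 0 :=
        (ENNReal.continuous_sub_left (a := 2) (by norm_num)).continuousAt
      have := hcont.tendsto.comp tendsto_tail
      simpa [tail, Function.comp_def] using this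
    rw [h2.liminf_eq] at h1
    exact h1


end S18

/-- Example 1: there is a light-tailed F with 0 < γ̂ < ∞ and
φ(γ̂) ∈ (1,∞) such that liminf (F*F)‾/F̄ = 2 < 2φ(γ̂); concretely the atomic
distribution with mass c e^{−γ̂3ⁿ}3^{−n} at 3ⁿ. -/
theorem stmt18 :
    ∃ (F : MeasureTheory.Measure ℝ) (γh c : ℝ), 0 < γh ∧ 0 < c ∧
      F = MeasureTheory.Measure.sum (fun n : ℕ =>
        (ENNReal.ofReal (c * Real.exp (-γh * 3 ^ n) * (3 : ℝ) ^ (-(n : ℤ)))) •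
          MeasureTheory.Measure.dirac ((3 : ℝ) ^ n)) ∧
      MeasureTheory.IsProbabilityMeasure F ∧
      F (Set.Iio 0) = 0 ∧ (∀ x : ℝ, tail F x ≠ 0) ∧
      0 < gammaHat F ∧ gammaHat F < ⊤ ∧
      1 < phiHat F ∧ phiHat F < ⊤ ∧
      liminf (fun x : ℝ => tail (mconv F F) x / tail F x) atTop = 2 ∧
      (2 : ℝ≥0∞) < 2 * phiHat F := by
  refine ⟨S18.F, 1, S18.c, one_pos, S18.c_pos, ?_, S18.F_prob, S18.F_Iio,
    (fun x => S18.tail_F_pos x), ?_, ?_, ?_, ?_, S18.liminf_eq_two, ?_⟩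
  · rw [S18.F]
    simp only [← S18.p_def]
  · rw [S18.gammaHat_F]; exact zero_lt_one
  · rw [S18.gammaHat_F]; exact ENNReal.one_lt_top
  · exact S18.one_lt_phiHat
  · exact S18.phiHat_lt_top
  · calc (2:ℝ≥0∞) = 2 * 1 := (mul_one 2).symm
      _ < 2 * phiHat S18.F := by
          rw [ENNReal.mul_lt_mul_iff_right (by norm_num) (by norm_num)]
          exact S18.one_lt_phiHat
end
end
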